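/- arXiv:2312.15173 — 6 statements merged into one kernel-verified Lean document; each statement's English description precedes it below -/
import Mathlib

section
/- Let (Ω, 𝒜, ℙ) be a probability space and X : Ω → ℝⁿ a random vector such that E[‖X‖^k] < ∞ for every positive integer k. Let Z ⊆ ℝ be a nonempty open interval and K : ℝⁿ × Z → ℝ be such that x ↦ K(x,z) is measurable for each z ∈ Z, and: (i) for every x ∈ ℝⁿ, z ↦ K(x,z) is continuous and strictly decreasing on Z; (ii) there exist a function L : Z → (0,∞) that is bounded on every compact subset of Z and an integer γ ≥ 1 such that |K(x,z)| ≤ L(z)(1 + ‖x‖^{2γ}) for all (x,z) ∈ ℝⁿ × Z; (iii) for every x ∈ ℝⁿ, inf_{z∈Z} K(x,z) < 0 < sup_{z∈Z} K(x,z). Then the function z ↦ E[K(X,z)] is continuous and strictly decreasing on Z, and there exists z ∈ Z such that E[K(X,z)] = 0. -/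
/-!
The growth bound `|K(x, z)| ≤ L(z) (1 + ‖x‖^{2γ})` dominates `K(X, z)` by an integrable function,
uniformly for `z` in a compact subset of `Z`; this gives integrability and, by dominated
convergence, continuity of `z ↦ E[K(X, z)]`. Strict monotonicity passes to the expectation
because `K` decreases strictly at every point. For a root, truncating `K(X, z)` from below at `-1`
and letting `z` run up through `Z` gives integrands decreasing to a bounded, everywhere negative
limit, so by monotone convergence `E[K(X, z)] < 0` for some `z`; symmetrically it is positive for
some `z`, and the intermediate value theorem on the interval `Z` yields the root.
-/

open MeasureTheory Filter Topology Set

section Integral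

variable {Ω : Type*} [MeasurableSpace Ω] {μ : Measure Ω}

theorem integral_lt_integral_of_forall_lt [NeZero μ] {f g : Ω → ℝ} (hf : Integrable f μ)
    (hg : Integrable g μ) (hfg : ∀ ω, f ω < g ω) : ∫ ω, f ω ∂μ < ∫ ω, g ω ∂μ := by
  have hsupp : Function.support (fun ω => g ω - f ω) = univ :=
    eq_univ_of_forall fun ω => (sub_pos.2 (hfg ω)).ne'
  have hpos : 0 < ∫ ω, (g ω - f ω) ∂μ := by
    rw [integral_pos_iff_support_of_nonneg (fun ω => (sub_pos.2 (hfg ω)).le) (hg.sub hf), hsupp]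
    simp [NeZero.ne μ]
  rwa [integral_sub hg hf, sub_pos] at hpos

theorem exists_integral_neg_of_antitone_nat [IsFiniteMeasure μ] [NeZero μ] {f : ℕ → Ω → ℝ}
    (hf : ∀ n, Integrable (f n) μ) (hanti : ∀ ω, Antitone (f · ω))
    (hneg : ∀ ω, ∃ n, f n ω < 0) : ∃ n, ∫ ω, f n ω ∂μ < 0 := by
  -- truncation at `-1` makes the pointwise limit integrable
  set g : ℕ → Ω → ℝ := fun n ω => max (f n ω) (-1)
  have hg : ∀ n, Integrable (g n) μ := fun n => (hf n).sup (integrable_const (-1))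
  have hg_anti : ∀ ω, Antitone (g · ω) := fun ω m n hmn => max_le_max_right _ (hanti ω hmn)
  have hg_bdd : ∀ ω, BddBelow (range (g · ω)) :=
    fun ω => ⟨-1, forall_mem_range.2 fun n => le_max_right _ _⟩
  set G : Ω → ℝ := fun ω => ⨅ n, g n ω
  have hG_tendsto : ∀ ω, Tendsto (g · ω) atTop (𝓝 (G ω)) :=
    fun ω => tendsto_atTop_ciInf (hg_anti ω) (hg_bdd ω)
  have hG_neg : ∀ ω, G ω < 0 := fun ω => by
    obtain ⟨n, hn⟩ := hneg ω
    exact (ciInf_le (hg_bdd ω) n).trans_lt (max_lt hn (by norm_num))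
  have hG : Integrable G μ := by
    refine (integrable_const 1).mono'
      (aestronglyMeasurable_of_tendsto_ae atTop (fun n => (hg n).1) (ae_of_all _ hG_tendsto))
      (ae_of_all _ fun ω => ?_)
    have hG_ge : -1 ≤ G ω := le_ciInf fun n => le_max_right _ _
    rw [Real.norm_eq_abs, abs_le]
    constructor <;> linarith [hG_neg ω]
  have hG_integral_neg : ∫ ω, G ω ∂μ < 0 := by
    simpa using integral_lt_integral_of_forall_lt hG (integrable_const 0) hG_neg
  obtain ⟨n, hn⟩ := ((integral_tendsto_of_tendsto_of_antitone hg hG (ae_of_all _ hg_anti)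
    (ae_of_all _ hG_tendsto)).eventually_lt_const hG_integral_neg).exists
  exact ⟨n, (integral_mono (hf n) (hg n) fun ω => le_max_left _ _).trans_lt hn⟩

theorem exists_integral_neg_of_antitone {ι : Type*} [Preorder ι] [Nonempty ι] [IsDirectedOrder ι]
    [(atTop : Filter ι).IsCountablyGenerated] [IsFiniteMeasure μ] [NeZero μ] {f : ι → Ω → ℝ}
    (hf : ∀ i, Integrable (f i) μ) (hanti : ∀ ω, Antitone (f · ω))
    (hneg : ∀ ω, ∃ i, f i ω < 0) : ∃ i, ∫ ω, f i ω ∂μ < 0 := by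
  obtain ⟨u, hu_mono, hu⟩ := exists_seq_monotone_tendsto_atTop_atTop ι
  have hneg_u : ∀ ω, ∃ n, f (u n) ω < 0 := fun ω => by
    obtain ⟨i, hi⟩ := hneg ω
    obtain ⟨n, hn⟩ := (tendsto_atTop.1 hu i).exists
    exact ⟨n, (hanti ω hn).trans_lt hi⟩
  obtain ⟨n, hn⟩ := exists_integral_neg_of_antitone_nat (fun n => hf (u n))
    (fun ω => (hanti ω).comp_monotone hu_mono) hneg_u
  exact ⟨u n, hn⟩

theorem continuousOn_integral_of_abs_le_mul {T : Type*} [TopologicalSpace T]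
    [FirstCountableTopology T] [LocallyCompactSpace T] {Z : Set T} (hZ : IsOpen Z)
    {F : T → Ω → ℝ} {L : T → ℝ} {B : Ω → ℝ}
    (hF_meas : ∀ z ∈ Z, AEStronglyMeasurable (F z) μ) (hF_cont : ∀ ω, ContinuousOn (F · ω) Z)
    (hL : ∀ s ⊆ Z, IsCompact s → ∃ M, ∀ z ∈ s, L z ≤ M)
    (hB : Integrable B μ) (hB_nonneg : ∀ ω, 0 ≤ B ω) (hFB : ∀ z ∈ Z, ∀ ω, |F z ω| ≤ L z * B ω) :
    ContinuousOn (fun z => ∫ ω, F z ω ∂μ) Z := by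
  intro z₀ hz₀
  have hZ_nhds : Z ∈ 𝓝 z₀ := hZ.mem_nhds hz₀
  obtain ⟨s, hs_nhds, hsZ, hs⟩ := local_compact_nhds hZ_nhds
  obtain ⟨M, hM⟩ := hL s hsZ hs
  refine (continuousAt_of_dominated (bound := fun ω => M * B ω) ?_ ?_ (hB.const_mul M)
    (ae_of_all _ fun ω => (hF_cont ω).continuousAt hZ_nhds)).continuousWithinAt
  · filter_upwards [hZ_nhds] with z hz using hF_meas z hz
  · filter_upwards [hs_nhds] with z hz
    exact ae_of_all _ fun ω => (hFB z (hsZ hz) ω).trans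
      (mul_le_mul_of_nonneg_right (hM z hz) (hB_nonneg ω))

end Integral

/-- Lemma 2.1 of the paper: the implicit equation `E[K(X, z)] = 0` has a root in `z`,
and `z ↦ E[K(X, z)]` is continuous and strictly decreasing on the open interval `Z`. -/
theorem stmt_0 {Ω : Type*} [MeasureSpace Ω] [IsProbabilityMeasure (volume : Measure Ω)]
    (n : ℕ) (X : Ω → EuclideanSpace ℝ (Fin n)) (hXmeas : Measurable X)
    (hmom : ∀ k : ℕ, 0 < k → Integrable fun ω => ‖X ω‖ ^ k)
    (Z : Set ℝ) (hZopen : IsOpen Z) (hZord : Z.OrdConnected) (hZne : Z.Nonempty)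
    (K : EuclideanSpace ℝ (Fin n) → ℝ → ℝ)
    (hKmeas : ∀ z ∈ Z, Measurable fun x => K x z)
    (hKcont : ∀ x, ContinuousOn (K x) Z)
    (hKanti : ∀ x, StrictAntiOn (K x) Z)
    (hKgrowth : ∃ L : ℝ → ℝ, (∀ z ∈ Z, 0 < L z) ∧
      (∀ s ⊆ Z, IsCompact s → ∃ M : ℝ, ∀ z ∈ s, L z ≤ M) ∧
      ∃ γ : ℕ, 1 ≤ γ ∧ ∀ x, ∀ z ∈ Z, |K x z| ≤ L z * (1 + ‖x‖ ^ (2 * γ)))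
    (hKneg : ∀ x, ∃ z ∈ Z, K x z < 0)
    (hKpos : ∀ x, ∃ z ∈ Z, 0 < K x z) :
    ContinuousOn (fun z => ∫ ω, K (X ω) z) Z ∧
    StrictAntiOn (fun z => ∫ ω, K (X ω) z) Z ∧
    ∃ z ∈ Z, (∫ ω, K (X ω) z) = 0 := by
  obtain ⟨L, -, hL, γ, hγ, hK_le⟩ := hKgrowth
  have hB : Integrable fun ω => 1 + ‖X ω‖ ^ (2 * γ) :=
    (integrable_const 1).add (hmom (2 * γ) (by omega))
  have hKX_meas : ∀ z ∈ Z, AEStronglyMeasurable fun ω => K (X ω) z :=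
    fun z hz => ((hKmeas z hz).comp hXmeas).aestronglyMeasurable
  have hKX_int : ∀ z ∈ Z, Integrable fun ω => K (X ω) z := fun z hz =>
    (hB.const_mul (L z)).mono' (hKX_meas z hz) (ae_of_all _ fun ω => hK_le (X ω) z hz)
  have hcont : ContinuousOn (fun z => ∫ ω, K (X ω) z) Z :=
    continuousOn_integral_of_abs_le_mul hZopen hKX_meas (fun ω => hKcont (X ω)) hL hB
      (fun ω => by positivity) fun z hz ω => hK_le (X ω) z hz
  have hanti : StrictAntiOn (fun z => ∫ ω, K (X ω) z) Z := fun z₁ h₁ z₂ h₂ h₁₂ =>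
    integral_lt_integral_of_forall_lt (hKX_int z₂ h₂) (hKX_int z₁ h₁)
      fun ω => hKanti (X ω) h₁ h₂ h₁₂
  refine ⟨hcont, hanti, ?_⟩
  have := hZne.to_subtype
  obtain ⟨⟨z_neg, hz_neg⟩, hneg⟩ := exists_integral_neg_of_antitone (ι := Z)
    (fun z => hKX_int z z.2) (fun ω z₁ z₂ h => (hKanti (X ω)).antitoneOn z₁.2 z₂.2 h)
    fun ω => (hKneg (X ω)).elim fun z hz => ⟨⟨z, hz.1⟩, hz.2⟩
  obtain ⟨⟨z_pos, hz_pos⟩, hpos⟩ := exists_integral_neg_of_antitone (ι := Zᵒᵈ)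
    (f := fun z ω => -K (X ω) (OrderDual.ofDual z : Z))
    (fun z => (hKX_int _ z.2).neg)
    (fun ω z₁ z₂ h => neg_le_neg ((hKanti (X ω)).antitoneOn z₂.2 z₁.2 h))
    fun ω => (hKpos (X ω)).elim fun z hz => ⟨⟨z, hz.1⟩, neg_neg_of_pos hz.2⟩
  rw [integral_neg, neg_neg_iff_pos] at hpos
  exact hZord.isPreconnected.intermediate_value hz_neg hz_pos hcont ⟨hneg.le, hpos.le⟩
end

section
/- Assume Assumption (F). Define h(y,z) = ∫_ℝ F(e^{√y t}/z) dN(t) for y ≥ 0 and z > 0, where N is the standard Gaussian (normal N(0,1)) probability measure on ℝ. Then h is continuously differentiable on [0,∞) × (0,∞) (with one-sided derivative in y at y = 0), and for every y ≥ 0 and z > 0, ∂h/∂z(y,z) = −(1/z²) ∫_ℝ F'(e^{√y t}/z) e^{√y t} dN(t) < 0. -/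
open MeasureTheory ProbabilityTheory Set Real Filter Topology

noncomputable section StmtAux
namespace StmtAux


lemma gauss_int_exp (c : ℝ) : Integrable (fun t => Real.exp (c * t)) (gaussianReal 0 1) := by
  rw [gaussianReal_of_var_ne_zero _ one_ne_zero]
  rw [integrable_withDensity_iff (measurable_gaussianPDF _ _)
    (Filter.Eventually.of_forall fun x => ENNReal.ofReal_lt_top)]
  have : ∀ t : ℝ, Real.exp (c * t) * (gaussianPDF 0 1 t).toReal
      = ((√(2 * π))⁻¹ * Real.exp (c^2/2)) * Real.exp (-(2⁻¹ : ℝ) * (t - c)^2) := by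
    intro t
    rw [gaussianPDF, ENNReal.toReal_ofReal (gaussianPDFReal_nonneg _ _ _), gaussianPDFReal]
    push_cast
    have h2 : rexp (c*t) * rexp (-(t-0)^2/(2*1)) = rexp (c^2/2) * rexp (-(2⁻¹:ℝ)*(t-c)^2) := by
      rw [← Real.exp_add, ← Real.exp_add]; congr 1; ring
    calc rexp (c*t) * ((√(2*π*1))⁻¹ * rexp (-(t-0)^2/(2*1)))
        = (√(2*π*1))⁻¹ * (rexp (c*t) * rexp (-(t-0)^2/(2*1))) := by ring
      _ = (√(2*π*1))⁻¹ * (rexp (c^2/2) * rexp (-(2⁻¹:ℝ)*(t-c)^2)) := by rw [h2]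
      _ = ((√(2*π))⁻¹ * rexp (c^2/2)) * rexp (-(2⁻¹:ℝ)*(t-c)^2) := by rw [mul_one (2*π)]; ring
  rw [show (fun t => Real.exp (c*t) * (gaussianPDF 0 1 t).toReal) = _ from funext this]
  exact ((integrable_exp_neg_mul_sq (by norm_num : (0:ℝ) < 2⁻¹)).comp_sub_right c).const_mul _

lemma gauss_int_exp_abs (c : ℝ) :
    Integrable (fun t => Real.exp (c * |t|)) (gaussianReal 0 1) := by
  refine ((gauss_int_exp c).add (gauss_int_exp (-c))).mono'
    ((Real.continuous_exp.comp (continuous_const.mul continuous_abs)).aestronglyMeasurable) ?_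
  refine Filter.Eventually.of_forall fun t => ?_
  rw [Real.norm_eq_abs, abs_of_pos (Real.exp_pos _)]
  simp only [Pi.add_apply]
  rcases abs_choice t with h | h
  · rw [h]; nlinarith [Real.exp_pos (-c * t)]
  · rw [h]
    have : c * -t = -c * t := by ring
    rw [this]
    nlinarith [Real.exp_pos (c * t)]

lemma gauss_map_neg :
    (gaussianReal 0 1).map (fun t => -t) = gaussianReal 0 1 := by
  have h := gaussianReal_map_const_mul (μ := 0) (v := 1) (-1)
  have h2 : (⟨(-1:ℝ)^2, sq_nonneg _⟩ : NNReal) * 1 = 1 := by ext; norm_num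
  erw [h2] at h
  simp only [neg_one_mul, neg_zero] at h
  exact h

lemma gauss_integral_id : ∫ t, t ∂(gaussianReal 0 1) = 0 := by
  have h1 : ∫ t, t ∂((gaussianReal 0 1).map (fun t => -t)) = ∫ t, -t ∂(gaussianReal 0 1) :=
    integral_map measurable_neg.aemeasurable aestronglyMeasurable_id
  rw [gauss_map_neg, integral_neg] at h1
  linarith


def f0 (F : ℝ → ℝ) (s z t : ℝ) : ℝ := F (Real.exp (s*t)/z)
def f1 (F' : ℝ → ℝ) (s z t : ℝ) : ℝ := F' (Real.exp (s*t)/z) * (t * (Real.exp (s*t)/z))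
def fz (F' : ℝ → ℝ) (s z t : ℝ) : ℝ := F' (Real.exp (s*t)/z) * (Real.exp (s*t) * -((z^2)⁻¹))
def f2 (F' F'' : ℝ → ℝ) (s z t : ℝ) : ℝ :=
  F'' (Real.exp (s*t)/z) * (t * (Real.exp (s*t)/z)) * (t * (Real.exp (s*t)/z))
    + F' (Real.exp (s*t)/z) * (t * (t * (Real.exp (s*t)/z)))

variable {F F' F'' : ℝ → ℝ} {L γ : ℝ}

lemma Qbound (hγ : 0 < γ)
    (hG : ∀ x > (0:ℝ), |F x| + |F' x| + |F'' x| ≤ L * (1 + x ^ γ + x ^ (-γ)))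
    {S zl zu : ℝ} (hS : 0 ≤ S) (hzl : 0 < zl) (hL : 0 < L) :
    ∀ s z t : ℝ, |s| ≤ S → zl ≤ z → z ≤ zu →
      |F (Real.exp (s*t)/z)| + |F' (Real.exp (s*t)/z)| + |F'' (Real.exp (s*t)/z)|
        ≤ (L * (1 + (zl^γ)⁻¹ + zu^γ)) * Real.exp (γ * S * |t|) := by
  intro s z t hs hz1 hz2
  have hz : 0 < z := lt_of_lt_of_le hzl hz1
  set x := Real.exp (s*t)/z with hxdef
  have hx : 0 < x := div_pos (Real.exp_pos _) hz
  refine (hG x hx).trans ?_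
  have hst : s*t ≤ S*|t| := by
    calc s*t ≤ |s*t| := le_abs_self _
    _ = |s| * |t| := abs_mul _ _
    _ ≤ S * |t| := by gcongr
  have hst' : -(s*t) ≤ S*|t| := by
    calc -(s*t) ≤ |s*t| := neg_le_abs _
    _ = |s| * |t| := abs_mul _ _
    _ ≤ S * |t| := by gcongr
  have hexp1 : Real.exp ((s*t)*γ) ≤ Real.exp ((γ*S*|t|)) := by
    apply Real.exp_le_exp.2; nlinarith
  have hexp2 : Real.exp (-(s*t)*γ) ≤ Real.exp ((γ*S*|t|)) := by
    apply Real.exp_le_exp.2; nlinarith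
  have h1e : (1:ℝ) ≤ Real.exp (γ*S*|t|) :=
    Real.one_le_exp (by positivity)
  have hxγ : x ^ γ ≤ (zl^γ)⁻¹ * Real.exp (γ*S*|t|) := by
    rw [hxdef, Real.div_rpow (Real.exp_pos _).le hz.le, ← Real.exp_mul]
    have hzz : zl^γ ≤ z^γ := Real.rpow_le_rpow hzl.le hz1 hγ.le
    have : Real.exp ((s*t)*γ) / z^γ ≤ Real.exp (γ*S*|t|) / zl^γ := by
      apply div_le_div₀ (Real.exp_pos _).le hexp1 (Real.rpow_pos_of_pos hzl γ) hzz
    calc Real.exp ((s*t)*γ) / z^γ ≤ Real.exp (γ*S*|t|) / zl^γ := this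
    _ = (zl^γ)⁻¹ * Real.exp (γ*S*|t|) := by ring
  have hxγ' : x ^ (-γ) ≤ zu^γ * Real.exp (γ*S*|t|) := by
    have hx2 : x ^ (-γ) = z^γ * Real.exp (-(s*t)*γ) := by
      rw [hxdef, Real.rpow_neg hx.le, Real.div_rpow (Real.exp_pos _).le hz.le,
        ← Real.exp_mul]
      rw [inv_div, div_eq_mul_inv, ← Real.exp_neg]
      ring_nf
    rw [hx2]
    have hzz : z^γ ≤ zu^γ := Real.rpow_le_rpow hz.le hz2 hγ.le
    exact mul_le_mul hzz hexp2 (Real.exp_pos _).le (Real.rpow_nonneg (hzl.le.trans (hz1.trans hz2)) γ)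
  calc L * (1 + x^γ + x^(-γ))
      ≤ L * (Real.exp (γ*S*|t|) + (zl^γ)⁻¹ * Real.exp (γ*S*|t|) + zu^γ * Real.exp (γ*S*|t|)) := by
        gcongr
    _ = (L * (1 + (zl^γ)⁻¹ + zu^γ)) * Real.exp (γ*S*|t|) := by ring


lemma bound_all (hγ : 0 < γ) (hL : 0 < L)
    (hG : ∀ x > (0:ℝ), |F x| + |F' x| + |F'' x| ≤ L * (1 + x ^ γ + x ^ (-γ)))
    {S zl zu : ℝ} (hS : 0 ≤ S) (hzl : 0 < zl)
    (hQ : ∀ s z t : ℝ, |s| ≤ S → zl ≤ z → z ≤ zu →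
      |F (Real.exp (s*t)/z)| + |F' (Real.exp (s*t)/z)| + |F'' (Real.exp (s*t)/z)|
        ≤ (L * (1 + (zl^γ)⁻¹ + zu^γ)) * Real.exp (γ * S * |t|))
    {s z t : ℝ} (hs : |s| ≤ S) (hz1 : zl ≤ z) (hz2 : z ≤ zu) :
    |f0 F s z t| ≤ (L * (1 + (zl^γ)⁻¹ + zu^γ)) * Real.exp ((γ*S)*|t|) ∧
    |f1 F' s z t| ≤ ((L * (1 + (zl^γ)⁻¹ + zu^γ))*zl⁻¹) * Real.exp ((γ*S+S+1)*|t|) ∧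
    |fz F' s z t| ≤ ((L * (1 + (zl^γ)⁻¹ + zu^γ))*(zl^2)⁻¹) * Real.exp ((γ*S+S)*|t|) ∧
    |f2 F' F'' s z t| ≤ ((L * (1 + (zl^γ)⁻¹ + zu^γ))*(zl⁻¹*zl⁻¹)) * Real.exp ((γ*S+2*S+2)*|t|)
      + ((L * (1 + (zl^γ)⁻¹ + zu^γ))*zl⁻¹) * Real.exp ((γ*S+S+2)*|t|) := by
  have hz : 0 < z := lt_of_lt_of_le hzl hz1
  set C₀ := L * (1 + (zl^γ)⁻¹ + zu^γ) with hC₀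
  set e := Real.exp (s*t) with he
  have hepos : 0 < e := Real.exp_pos _
  have hQ' := hQ s z t hs hz1 hz2
  have habsF : |F (e/z)| ≤ C₀ * Real.exp (γ*S*|t|) := by
    have := abs_nonneg (F' (e/z)); have := abs_nonneg (F'' (e/z)); linarith
  have habsF' : |F' (e/z)| ≤ C₀ * Real.exp (γ*S*|t|) := by
    have := abs_nonneg (F (e/z)); have := abs_nonneg (F'' (e/z)); linarith
  have habsF'' : |F'' (e/z)| ≤ C₀ * Real.exp (γ*S*|t|) := by
    have := abs_nonneg (F (e/z)); have := abs_nonneg (F' (e/z)); linarith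
  have hC₀pos : 0 ≤ C₀ * Real.exp (γ*S*|t|) := le_trans (abs_nonneg _) habsF
  have hE : e ≤ Real.exp (S*|t|) := by
    apply Real.exp_le_exp.2
    calc s*t ≤ |s*t| := le_abs_self _
    _ = |s| * |t| := abs_mul _ _
    _ ≤ S * |t| := by gcongr
  have ht : |t| ≤ Real.exp |t| := by
    nlinarith [Real.add_one_le_exp |t|, abs_nonneg t]
  have hiz : z⁻¹ ≤ zl⁻¹ := by gcongr
  have hiz2 : (z^2)⁻¹ ≤ (zl^2)⁻¹ := by gcongr
  have hr : |t| * (e/z) ≤ Real.exp |t| * (Real.exp (S*|t|) * zl⁻¹) := by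
    rw [div_eq_mul_inv]
    exact mul_le_mul ht (mul_le_mul hE hiz (by positivity) (Real.exp_pos _).le)
      (by positivity) (Real.exp_pos _).le
  refine ⟨?_, ?_, ?_, ?_⟩
  · calc |f0 F s z t| = |F (e/z)| := rfl
    _ ≤ C₀ * Real.exp (γ*S*|t|) := habsF
    _ = C₀ * Real.exp ((γ*S)*|t|) := by ring_nf
  · have e1 : |f1 F' s z t| = |F' (e/z)| * (|t| * (e/z)) := by
      show |F' (e/z) * (t * (e/z))| = _
      rw [abs_mul, abs_mul, abs_of_pos (div_pos hepos hz)]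
    calc |f1 F' s z t| = |F' (e/z)| * (|t| * (e/z)) := e1
    _ ≤ (C₀ * Real.exp (γ*S*|t|)) * (Real.exp |t| * (Real.exp (S*|t|) * zl⁻¹)) :=
        mul_le_mul habsF' hr (by positivity) hC₀pos
    _ = (C₀*zl⁻¹) * (Real.exp (γ*S*|t|) * Real.exp (S*|t|) * Real.exp |t|) := by ring
    _ = (C₀*zl⁻¹) * Real.exp ((γ*S+S+1)*|t|) := by
          rw [show (γ*S+S+1)*|t| = γ*S*|t| + S*|t| + |t| by ring]
          simp only [Real.exp_add]
  · have e1 : |fz F' s z t| = |F' (e/z)| * (e * (z^2)⁻¹) := by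
      show |F' (e/z) * (e * -((z^2)⁻¹))| = _
      rw [abs_mul, abs_mul, abs_neg, abs_of_pos hepos,
        abs_of_pos (by positivity : (0:ℝ) < (z^2)⁻¹)]
    calc |fz F' s z t| = |F' (e/z)| * (e * (z^2)⁻¹) := e1
    _ ≤ (C₀ * Real.exp (γ*S*|t|)) * (Real.exp (S*|t|) * (zl^2)⁻¹) :=
        mul_le_mul habsF' (mul_le_mul hE hiz2 (by positivity) (Real.exp_pos _).le)
          (by positivity) hC₀pos
    _ = (C₀*(zl^2)⁻¹) * (Real.exp (γ*S*|t|) * Real.exp (S*|t|)) := by ring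
    _ = (C₀*(zl^2)⁻¹) * Real.exp ((γ*S+S)*|t|) := by
          rw [show (γ*S+S)*|t| = γ*S*|t| + S*|t| by ring]
          simp only [Real.exp_add]
  · calc |f2 F' F'' s z t|
        ≤ |F'' (e/z) * (t * (e/z)) * (t * (e/z))| + |F' (e/z) * (t * (t * (e/z)))| := by
          show |F'' (e/z) * (t * (e/z)) * (t * (e/z)) + F' (e/z) * (t * (t * (e/z)))| ≤ _
          exact abs_add_le _ _
    _ = |F'' (e/z)| * (|t| * (e/z)) * (|t| * (e/z)) + |F' (e/z)| * (|t| * (|t| * (e/z))) := by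
          rw [abs_mul, abs_mul, abs_mul, abs_mul, abs_mul, abs_mul,
            abs_of_pos (div_pos hepos hz)]
    _ ≤ (C₀ * Real.exp (γ*S*|t|)) * (Real.exp |t| * (Real.exp (S*|t|) * zl⁻¹))
          * (Real.exp |t| * (Real.exp (S*|t|) * zl⁻¹))
        + (C₀ * Real.exp (γ*S*|t|)) * (Real.exp |t| * (Real.exp |t| * (Real.exp (S*|t|) * zl⁻¹))) := by
          have h1 : |F'' (e/z)| * (|t| * (e/z)) * (|t| * (e/z))
              ≤ (C₀ * Real.exp (γ*S*|t|)) * (Real.exp |t| * (Real.exp (S*|t|) * zl⁻¹))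
                * (Real.exp |t| * (Real.exp (S*|t|) * zl⁻¹)) := by
            apply mul_le_mul (mul_le_mul habsF'' hr (by positivity) hC₀pos) hr (by positivity)
            positivity
          have h2 : |F' (e/z)| * (|t| * (|t| * (e/z)))
              ≤ (C₀ * Real.exp (γ*S*|t|)) * (Real.exp |t| * (Real.exp |t| * (Real.exp (S*|t|) * zl⁻¹))) := by
            apply mul_le_mul habsF' (mul_le_mul ht hr (by positivity) (Real.exp_pos _).le)
              (by positivity) hC₀pos
          linarith
    _ = (C₀*(zl⁻¹*zl⁻¹)) * (Real.exp (γ*S*|t|) * Real.exp (S*|t|) * Real.exp (S*|t|)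
          * Real.exp |t| * Real.exp |t|)
        + (C₀*zl⁻¹) * (Real.exp (γ*S*|t|) * Real.exp (S*|t|) * Real.exp |t| * Real.exp |t|) := by
          ring
    _ = (C₀*(zl⁻¹*zl⁻¹)) * Real.exp ((γ*S+2*S+2)*|t|) + (C₀*zl⁻¹) * Real.exp ((γ*S+S+2)*|t|) := by
          rw [show (γ*S+2*S+2)*|t| = γ*S*|t| + S*|t| + S*|t| + |t| + |t| by ring,
            show (γ*S+S+2)*|t| = γ*S*|t| + S*|t| + |t| + |t| by ring]
          simp only [Real.exp_add]


def l1 : ℝ × ℝ →L[ℝ] ℝ := ContinuousLinearMap.fst ℝ ℝ ℝ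
def l2 : ℝ × ℝ →L[ℝ] ℝ := ContinuousLinearMap.snd ℝ ℝ ℝ

variable {F F' F'' : ℝ → ℝ} {L γ : ℝ}

lemma hasDerivAt_inner (z t s : ℝ) :
    HasDerivAt (fun s' => Real.exp (s'*t)/z) (t * (Real.exp (s*t)/z)) s := by
  have h2 : t * (Real.exp (s*t)/z) = Real.exp (s*t) * (1*t)/z := by ring
  rw [h2]
  exact (((hasDerivAt_id s).mul_const t).exp).div_const z

lemma hd_f0s (hdF : ∀ x > (0:ℝ), HasDerivAt F (F' x) x) {z : ℝ} (hz : 0 < z) (s t : ℝ) :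
    HasDerivAt (fun s' => f0 F s' z t) (f1 F' s z t) s :=
  (hdF _ (div_pos (Real.exp_pos _) hz)).comp s (hasDerivAt_inner z t s)

lemma hd_f1s (hdF' : ∀ x > (0:ℝ), HasDerivAt F' (F'' x) x) {z : ℝ} (hz : 0 < z) (s t : ℝ) :
    HasDerivAt (fun s' => f1 F' s' z t) (f2 F' F'' s z t) s :=
  ((hdF' _ (div_pos (Real.exp_pos _) hz)).comp s (hasDerivAt_inner z t s)).mul
    ((hasDerivAt_inner z t s).const_mul t)

lemma hd_f0z (hdF : ∀ x > (0:ℝ), HasDerivAt F (F' x) x) {z : ℝ} (hz : 0 < z) (s t : ℝ) :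
    HasDerivAt (fun z' => f0 F s z' t) (fz F' s z t) z := by
  have hi : HasDerivAt (fun z' : ℝ => Real.exp (s*t)/z') (Real.exp (s*t) * -((z^2)⁻¹)) z := by
    simp only [div_eq_mul_inv]
    exact (hasDerivAt_inv hz.ne').const_mul (Real.exp (s*t))
  exact (hdF _ (div_pos (Real.exp_pos _) hz)).comp z hi

lemma hfd_f0 (hdF : ∀ x > (0:ℝ), HasDerivAt F (F' x) x) {z : ℝ} (hz : 0 < z) (s t : ℝ) :
    HasFDerivAt (fun p : ℝ × ℝ => f0 F p.1 p.2 t)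
      (f1 F' s z t • l1 + fz F' s z t • l2) (s,z) := by
  have h1 : HasFDerivAt (fun p : ℝ × ℝ => p.1 * t) (t • l1) (s,z) :=
    l1.hasFDerivAt.mul_const t
  have h2 := h1.exp
  have h3 : HasFDerivAt (fun p : ℝ × ℝ => p.2) l2 (s,z) := l2.hasFDerivAt
  have hinv : HasFDerivAt (fun p : ℝ × ℝ => (p.2)⁻¹) ((-(z^2)⁻¹) • l2) (s,z) :=
    (hasDerivAt_inv hz.ne').comp_hasFDerivAt (s,z) h3
  have h4 := h2.mul hinv
  have h4' : HasFDerivAt (fun p : ℝ × ℝ => Real.exp (p.1*t)/p.2)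
      (Real.exp (s*t) • -(z^2)⁻¹ • l2 + z⁻¹ • Real.exp (s*t) • t • l1) (s,z) :=
    h4.congr_of_eventuallyEq (Filter.Eventually.of_forall fun p => div_eq_mul_inv _ _)
  have h5 := (hdF (Real.exp (s*t)/z) (div_pos (Real.exp_pos _) hz)).comp_hasFDerivAt (s,z) h4'
  refine h5.congr_fderiv ?_
  apply ContinuousLinearMap.ext
  intro w
  simp only [ContinuousLinearMap.add_apply, ContinuousLinearMap.coe_smul', Pi.smul_apply,
    ContinuousLinearMap.coe_sub', Pi.sub_apply, smul_eq_mul, f1, fz]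
  simp only [l1, l2, ContinuousLinearMap.coe_fst', ContinuousLinearMap.coe_snd']
  ring

-- continuity of F, F' on (0,∞)
lemma contF (hdF : ∀ x > (0:ℝ), HasDerivAt F (F' x) x) : ContinuousOn F (Ioi 0) :=
  fun x hx => ((hdF x hx).continuousAt).continuousWithinAt

lemma cont_t_f0 (hdF : ∀ x > (0:ℝ), HasDerivAt F (F' x) x) {z : ℝ} (hz : 0 < z) (s : ℝ) :
    Continuous (fun t => f0 F s z t) :=
  (contF hdF).comp_continuous
    ((Real.continuous_exp.comp (continuous_const.mul continuous_id)).div_const z)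
    (fun t => div_pos (Real.exp_pos _) hz)

lemma cont_t_f1 (hdF' : ∀ x > (0:ℝ), HasDerivAt F' (F'' x) x) {z : ℝ} (hz : 0 < z) (s : ℝ) :
    Continuous (fun t => f1 F' s z t) := by
  have he : Continuous (fun t : ℝ => Real.exp (s*t)/z) :=
    (Real.continuous_exp.comp (continuous_const.mul continuous_id)).div_const z
  exact ((contF hdF').comp_continuous he (fun t => div_pos (Real.exp_pos _) hz)).mul
    (continuous_id.mul he)

lemma cont_t_fz (hdF' : ∀ x > (0:ℝ), HasDerivAt F' (F'' x) x) {z : ℝ} (hz : 0 < z) (s : ℝ) :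
    Continuous (fun t => fz F' s z t) := by
  have he : Continuous (fun t : ℝ => Real.exp (s*t)/z) :=
    (Real.continuous_exp.comp (continuous_const.mul continuous_id)).div_const z
  exact ((contF hdF').comp_continuous he (fun t => div_pos (Real.exp_pos _) hz)).mul
    ((Real.continuous_exp.comp (continuous_const.mul continuous_id)).mul continuous_const)

lemma cont_t_f2 (hdF' : ∀ x > (0:ℝ), HasDerivAt F' (F'' x) x)
    (hF''cont : ContinuousOn F'' (Ioi 0)) {z : ℝ} (hz : 0 < z) (s : ℝ) :
    Continuous (fun t => f2 F' F'' s z t) := by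
  have he : Continuous (fun t : ℝ => Real.exp (s*t)/z) :=
    (Real.continuous_exp.comp (continuous_const.mul continuous_id)).div_const z
  have hmem : ∀ t : ℝ, Real.exp (s*t)/z ∈ Ioi (0:ℝ) := fun t => div_pos (Real.exp_pos _) hz
  exact (((hF''cont.comp_continuous he hmem).mul (continuous_id.mul he)).mul
      (continuous_id.mul he)).add
    (((contF hdF').comp_continuous he hmem).mul (continuous_id.mul (continuous_id.mul he)))

-- joint continuity in (s,z) for fixed t
lemma cont_p_inner (t : ℝ) {p₀ : ℝ × ℝ} (hz : 0 < p₀.2) :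
    ContinuousAt (fun p : ℝ × ℝ => Real.exp (p.1*t)/p.2) p₀ :=
  ((Real.continuous_exp.comp (continuous_fst.mul continuous_const)).continuousAt).div
    continuousAt_snd hz.ne'

lemma cont_p_comp {G : ℝ → ℝ} (t : ℝ) {p₀ : ℝ × ℝ} (hz : 0 < p₀.2)
    (hGc : ContinuousAt G (Real.exp (p₀.1*t)/p₀.2)) :
    ContinuousAt (fun p : ℝ × ℝ => G (Real.exp (p.1*t)/p.2)) p₀ :=
  ContinuousAt.comp hGc (cont_p_inner t hz)

lemma cont_p_f0 (hdF : ∀ x > (0:ℝ), HasDerivAt F (F' x) x) (t : ℝ) {p₀ : ℝ × ℝ}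
    (hz : 0 < p₀.2) : ContinuousAt (fun p : ℝ × ℝ => f0 F p.1 p.2 t) p₀ :=
  cont_p_comp t hz ((hdF _ (div_pos (Real.exp_pos _) hz)).continuousAt)

lemma cont_p_f1 (hdF' : ∀ x > (0:ℝ), HasDerivAt F' (F'' x) x) (t : ℝ) {p₀ : ℝ × ℝ}
    (hz : 0 < p₀.2) : ContinuousAt (fun p : ℝ × ℝ => f1 F' p.1 p.2 t) p₀ :=
  (cont_p_comp t hz ((hdF' _ (div_pos (Real.exp_pos _) hz)).continuousAt)).mul
    (continuousAt_const.mul (cont_p_inner t hz))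

lemma cont_p_fz (hdF' : ∀ x > (0:ℝ), HasDerivAt F' (F'' x) x) (t : ℝ) {p₀ : ℝ × ℝ}
    (hz : 0 < p₀.2) : ContinuousAt (fun p : ℝ × ℝ => fz F' p.1 p.2 t) p₀ :=
  (cont_p_comp t hz ((hdF' _ (div_pos (Real.exp_pos _) hz)).continuousAt)).mul
    (((Real.continuous_exp.comp (continuous_fst.mul continuous_const)).continuousAt).mul
      ((((continuous_snd.pow 2).continuousAt (x := p₀)).inv₀ (by exact (pow_pos hz 2).ne')).neg))

lemma cont_p_f2 (hdF' : ∀ x > (0:ℝ), HasDerivAt F' (F'' x) x)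
    (hF''cont : ContinuousOn F'' (Ioi 0)) (t : ℝ) {p₀ : ℝ × ℝ} (hz : 0 < p₀.2) :
    ContinuousAt (fun p : ℝ × ℝ => f2 F' F'' p.1 p.2 t) p₀ := by
  have hin := cont_p_inner t hz
  have hF'' : ContinuousAt F'' (Real.exp (p₀.1*t)/p₀.2) :=
    hF''cont.continuousAt (Ioi_mem_nhds (div_pos (Real.exp_pos _) hz))
  have hF' : ContinuousAt F' (Real.exp (p₀.1*t)/p₀.2) :=
    (hdF' _ (div_pos (Real.exp_pos _) hz)).continuousAt
  exact (((cont_p_comp t hz hF'').mul (continuousAt_const.mul hin)).mul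
      (continuousAt_const.mul hin)).add
    ((cont_p_comp t hz hF').mul (continuousAt_const.mul (continuousAt_const.mul hin)))



local notation "gν" => gaussianReal 0 1

lemma norm_l1_le : ‖l1‖ ≤ 1 :=
  l1.opNorm_le_bound zero_le_one (fun p => by simpa [l1] using norm_fst_le p)

lemma norm_l2_le : ‖l2‖ ≤ 1 :=
  l2.opNorm_le_bound zero_le_one (fun p => by simpa [l2] using norm_snd_le p)

lemma ball_box {s₀ z₀ : ℝ} (hz₀ : 0 < z₀) :
    ∀ p : ℝ × ℝ, p ∈ Metric.ball ((s₀,z₀) : ℝ × ℝ) (min (z₀/2) 1) →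
      |p.1| ≤ |s₀|+1 ∧ z₀/2 ≤ p.2 ∧ p.2 ≤ z₀+1 := by
  intro p hp
  rw [Metric.mem_ball, Prod.dist_eq, max_lt_iff, Real.dist_eq, Real.dist_eq] at hp
  obtain ⟨h1, h2⟩ := hp
  have e1 : |p.1 - s₀| < 1 := lt_of_lt_of_le h1 (min_le_right _ _)
  have e2 : |p.2 - z₀| < z₀/2 := lt_of_lt_of_le h2 (min_le_left _ _)
  have e3 : |p.1| - |s₀| ≤ |p.1 - s₀| := by
    have := abs_sub_abs_le_abs_sub p.1 s₀; linarith
  have e2b : |p.2 - z₀| < 1 := lt_of_lt_of_le h2 (min_le_right _ _)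
  rw [abs_lt] at e2 e2b
  exact ⟨by linarith, by linarith, by linarith⟩

section Param

variable {F F' F'' : ℝ → ℝ} {L γ : ℝ}
variable (hdF : ∀ x > (0:ℝ), HasDerivAt F (F' x) x)
variable (hdF' : ∀ x > (0:ℝ), HasDerivAt F' (F'' x) x)
variable (hF''cont : ContinuousOn F'' (Ioi 0))
variable (hγ : 0 < γ) (hL : 0 < L)
variable (hG : ∀ x > (0:ℝ), |F x| + |F' x| + |F'' x| ≤ L * (1 + x ^ γ + x ^ (-γ)))

include hγ hL hG in
lemma integrable_f0 (hdF : ∀ x > (0:ℝ), HasDerivAt F (F' x) x) {s z : ℝ} (hz : 0 < z) :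
    Integrable (fun t => f0 F s z t) gν := by
  have hQ := Qbound hγ hG (abs_nonneg s) hz hL (zu := z)
  refine Integrable.mono' ((gauss_int_exp_abs (γ*|s|)).const_mul (L * (1 + (z^γ)⁻¹ + z^γ)))
    (cont_t_f0 hdF hz s).aestronglyMeasurable (Filter.Eventually.of_forall fun t => ?_)
  exact (bound_all hγ hL hG (abs_nonneg s) hz hQ (le_refl _) (le_refl _) (le_refl _)).1

include hγ hL hG in
lemma integrable_f1 (hdF' : ∀ x > (0:ℝ), HasDerivAt F' (F'' x) x) {s z : ℝ} (hz : 0 < z) :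
    Integrable (fun t => f1 F' s z t) gν := by
  have hQ := Qbound hγ hG (abs_nonneg s) hz hL (zu := z)
  refine Integrable.mono'
    ((gauss_int_exp_abs (γ*|s|+|s|+1)).const_mul ((L * (1 + (z^γ)⁻¹ + z^γ))*z⁻¹))
    (cont_t_f1 hdF' hz s).aestronglyMeasurable (Filter.Eventually.of_forall fun t => ?_)
  exact (bound_all hγ hL hG (abs_nonneg s) hz hQ (le_refl _) (le_refl _) (le_refl _)).2.1

include hγ hL hG in
lemma integrable_fz (hdF' : ∀ x > (0:ℝ), HasDerivAt F' (F'' x) x) {s z : ℝ} (hz : 0 < z) :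
    Integrable (fun t => fz F' s z t) gν := by
  have hQ := Qbound hγ hG (abs_nonneg s) hz hL (zu := z)
  refine Integrable.mono'
    ((gauss_int_exp_abs (γ*|s|+|s|)).const_mul ((L * (1 + (z^γ)⁻¹ + z^γ))*(z^2)⁻¹))
    (cont_t_fz hdF' hz s).aestronglyMeasurable (Filter.Eventually.of_forall fun t => ?_)
  exact (bound_all hγ hL hG (abs_nonneg s) hz hQ (le_refl _) (le_refl _) (le_refl _)).2.2.1

include hγ hL hG in
lemma integrable_f2 (hdF' : ∀ x > (0:ℝ), HasDerivAt F' (F'' x) x)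
    (hF''cont : ContinuousOn F'' (Ioi 0)) {s z : ℝ} (hz : 0 < z) :
    Integrable (fun t => f2 F' F'' s z t) gν := by
  have hQ := Qbound hγ hG (abs_nonneg s) hz hL (zu := z)
  refine Integrable.mono'
    ((((gauss_int_exp_abs (γ*|s|+2*|s|+2)).const_mul ((L * (1 + (z^γ)⁻¹ + z^γ))*(z⁻¹*z⁻¹)))).add
      ((gauss_int_exp_abs (γ*|s|+|s|+2)).const_mul ((L * (1 + (z^γ)⁻¹ + z^γ))*z⁻¹)))
    (cont_t_f2 hdF' hF''cont hz s).aestronglyMeasurable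
    (Filter.Eventually.of_forall fun t => ?_)
  exact (bound_all hγ hL hG (abs_nonneg s) hz hQ (le_refl _) (le_refl _) (le_refl _)).2.2.2

end Param

section Param2

variable {F F' F'' : ℝ → ℝ} {L γ : ℝ}
variable (hdF : ∀ x > (0:ℝ), HasDerivAt F (F' x) x)
variable (hdF' : ∀ x > (0:ℝ), HasDerivAt F' (F'' x) x)
variable (hF''cont : ContinuousOn F'' (Ioi 0))
variable (hγ : 0 < γ) (hL : 0 < L)
variable (hG : ∀ x > (0:ℝ), |F x| + |F' x| + |F'' x| ≤ L * (1 + x ^ γ + x ^ (-γ)))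

include hdF hdF' hγ hL hG in
lemma hasFDerivAt_g {s₀ z₀ : ℝ} (hz₀ : 0 < z₀) :
    HasFDerivAt (fun p : ℝ × ℝ => ∫ t, f0 F p.1 p.2 t ∂gν)
      ((∫ t, f1 F' s₀ z₀ t ∂gν) • l1 + (∫ t, fz F' s₀ z₀ t ∂gν) • l2) (s₀,z₀) := by
  have hS : (0:ℝ) ≤ |s₀|+1 := by positivity
  have hzl : (0:ℝ) < z₀/2 := by linarith
  have hQ := Qbound hγ hG hS hzl hL (zu := z₀+1)
  have hεpos : (0:ℝ) < min (z₀/2) 1 := lt_min hzl one_pos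
  set C₀ := L * (1 + ((z₀/2)^γ)⁻¹ + (z₀+1)^γ) with hC₀def
  have key := hasFDerivAt_integral_of_dominated_of_fderiv_le (μ := gν)
    (F := fun (p : ℝ × ℝ) t => f0 F p.1 p.2 t)
    (F' := fun (p : ℝ × ℝ) t => f1 F' p.1 p.2 t • l1 + fz F' p.1 p.2 t • l2)
    (bound := fun t => (C₀*(z₀/2)⁻¹) * Real.exp ((γ*(|s₀|+1)+(|s₀|+1)+1)*|t|)
      + (C₀*((z₀/2)^2)⁻¹) * Real.exp ((γ*(|s₀|+1)+(|s₀|+1))*|t|))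
    (x₀ := ((s₀,z₀) : ℝ × ℝ)) (s := Metric.ball ((s₀,z₀) : ℝ × ℝ) (min (z₀/2) 1)) (Metric.ball_mem_nhds _ hεpos)
    ?_ (integrable_f0 hγ hL hG hdF hz₀) ?_ ?_ ?_ ?_
  · rw [integral_add ((integrable_f1 hγ hL hG hdF' hz₀).smul_const l1)
      ((integrable_fz hγ hL hG hdF' hz₀).smul_const l2),
      integral_smul_const, integral_smul_const] at key
    exact key
  · filter_upwards [IsOpen.mem_nhds (isOpen_lt continuous_const continuous_snd)
      (show (0:ℝ) < ((s₀,z₀) : ℝ × ℝ).2 from hz₀)] with p hp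
    exact (cont_t_f0 hdF hp p.1).aestronglyMeasurable
  · exact (((cont_t_f1 hdF' hz₀ s₀).smul continuous_const).add
      ((cont_t_fz hdF' hz₀ s₀).smul continuous_const)).aestronglyMeasurable
  · refine Filter.Eventually.of_forall fun t => fun p hp => ?_
    obtain ⟨hb1, hb2, hb3⟩ := ball_box hz₀ p hp
    have ba := bound_all hγ hL hG hS hzl hQ hb1 hb2 hb3 (t := t)
    have n1 : ‖f1 F' p.1 p.2 t • l1‖ ≤ |f1 F' p.1 p.2 t| := by
      refine ContinuousLinearMap.opNorm_le_bound _ (abs_nonneg _) fun w => ?_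
      rw [ContinuousLinearMap.smul_apply, norm_smul, Real.norm_eq_abs]
      refine mul_le_mul_of_nonneg_left ?_ (abs_nonneg _)
      simpa [l1] using norm_fst_le w
    have n2 : ‖fz F' p.1 p.2 t • l2‖ ≤ |fz F' p.1 p.2 t| := by
      refine ContinuousLinearMap.opNorm_le_bound _ (abs_nonneg _) fun w => ?_
      rw [ContinuousLinearMap.smul_apply, norm_smul, Real.norm_eq_abs]
      refine mul_le_mul_of_nonneg_left ?_ (abs_nonneg _)
      simpa [l2] using norm_snd_le w
    calc ‖f1 F' p.1 p.2 t • l1 + fz F' p.1 p.2 t • l2‖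
        ≤ ‖f1 F' p.1 p.2 t • l1‖ + ‖fz F' p.1 p.2 t • l2‖ := norm_add_le _ _
      _ ≤ |f1 F' p.1 p.2 t| + |fz F' p.1 p.2 t| := add_le_add n1 n2
      _ ≤ _ := add_le_add ba.2.1 ba.2.2.1
  · exact ((gauss_int_exp_abs _).const_mul _).add ((gauss_int_exp_abs _).const_mul _)
  · refine Filter.Eventually.of_forall fun t => fun p hp => ?_
    obtain ⟨hb1, hb2, hb3⟩ := ball_box hz₀ p hp
    have hpz : 0 < p.2 := lt_of_lt_of_le hzl hb2
    exact hfd_f0 hdF hpz p.1 t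

include hdF' hF''cont hγ hL hG in
lemma hasDerivAt_g1s {s₀ z : ℝ} (hz : 0 < z) :
    HasDerivAt (fun s => ∫ t, f1 F' s z t ∂gν) (∫ t, f2 F' F'' s₀ z t ∂gν) s₀ := by
  have hS : (0:ℝ) ≤ |s₀|+1 := by positivity
  have hQ := Qbound hγ hG hS hz hL (zu := z)
  set C₀ := L * (1 + (z^γ)⁻¹ + z^γ) with hC₀def
  refine (hasDerivAt_integral_of_dominated_loc_of_deriv_le (μ := gν) (𝕜 := ℝ)
    (F := fun s t => f1 F' s z t) (F' := fun s t => f2 F' F'' s z t)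
    (x₀ := s₀) (s := Metric.ball s₀ 1) (Metric.ball_mem_nhds _ one_pos)
    (bound := fun t => (C₀*(z⁻¹*z⁻¹)) * Real.exp ((γ*(|s₀|+1)+2*(|s₀|+1)+2)*|t|)
      + (C₀*z⁻¹) * Real.exp ((γ*(|s₀|+1)+(|s₀|+1)+2)*|t|))
    ?_ (integrable_f1 hγ hL hG hdF' hz) ?_ ?_ ?_ ?_).2
  · exact Filter.Eventually.of_forall fun s => (cont_t_f1 hdF' hz s).aestronglyMeasurable
  · exact (cont_t_f2 hdF' hF''cont hz s₀).aestronglyMeasurable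
  · refine Filter.Eventually.of_forall fun t => fun s hs => ?_
    have hb1 : |s| ≤ |s₀|+1 := by
      rw [Metric.mem_ball, Real.dist_eq] at hs
      have := abs_sub_abs_le_abs_sub s s₀
      linarith
    have ba := bound_all hγ hL hG hS hz hQ hb1 (le_refl z) (le_refl z) (t := t)
    rw [Real.norm_eq_abs]
    exact ba.2.2.2
  · exact ((gauss_int_exp_abs _).const_mul _).add ((gauss_int_exp_abs _).const_mul _)
  · exact Filter.Eventually.of_forall fun t => fun s hs => hd_f1s hdF' hz s t

lemma contAux {G : ℝ × ℝ → ℝ → ℝ} {p₀ : ℝ × ℝ} {bnd : ℝ → ℝ}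
    (hmeas : ∀ᶠ p in 𝓝 p₀, AEStronglyMeasurable (G p) gν)
    (hbound : ∀ᶠ p in 𝓝 p₀, ∀ t, |G p t| ≤ bnd t)
    (hbint : Integrable bnd gν)
    (hcont : ∀ t, ContinuousAt (fun p => G p t) p₀) :
    ContinuousAt (fun p => ∫ t, G p t ∂gν) p₀ :=
  continuousAt_of_dominated hmeas
    (hbound.mono fun p h => Filter.Eventually.of_forall fun t => by
      rw [Real.norm_eq_abs]; exact h t)
    hbint (Filter.Eventually.of_forall hcont)

include hdF hdF' hF''cont hγ hL hG in
lemma cont_ints {p₀ : ℝ × ℝ} (hz₀ : 0 < p₀.2) :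
    ContinuousAt (fun p : ℝ × ℝ => ∫ t, f0 F p.1 p.2 t ∂gν) p₀ ∧
    ContinuousAt (fun p : ℝ × ℝ => ∫ t, f1 F' p.1 p.2 t ∂gν) p₀ ∧
    ContinuousAt (fun p : ℝ × ℝ => ∫ t, fz F' p.1 p.2 t ∂gν) p₀ ∧
    ContinuousAt (fun p : ℝ × ℝ => ∫ t, f2 F' F'' p.1 p.2 t ∂gν) p₀ := by
  have hS : (0:ℝ) ≤ |p₀.1|+1 := by positivity
  have hzl : (0:ℝ) < p₀.2/2 := by linarith
  have hQ := Qbound hγ hG hS hzl hL (zu := p₀.2+1)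
  have hball : Metric.ball ((p₀.1,p₀.2) : ℝ × ℝ) (min (p₀.2/2) 1) ∈ 𝓝 p₀ :=
    Metric.ball_mem_nhds _ (lt_min hzl one_pos)
  have hopen : ∀ᶠ p : ℝ × ℝ in 𝓝 p₀, 0 < p.2 :=
    IsOpen.mem_nhds (isOpen_lt continuous_const continuous_snd) hz₀
  have hbox : ∀ᶠ p : ℝ × ℝ in 𝓝 p₀,
      |p.1| ≤ |p₀.1|+1 ∧ p₀.2/2 ≤ p.2 ∧ p.2 ≤ p₀.2+1 := by
    filter_upwards [hball] with p hp
    exact ball_box hz₀ p hp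
  refine ⟨?_, ?_, ?_, ?_⟩
  · refine contAux ?_ ?_ ((gauss_int_exp_abs (γ*(|p₀.1|+1))).const_mul
      (L * (1 + ((p₀.2/2)^γ)⁻¹ + (p₀.2+1)^γ))) (fun t => cont_p_f0 hdF t hz₀)
    · filter_upwards [hopen] with p hp
      exact (cont_t_f0 hdF hp p.1).aestronglyMeasurable
    · filter_upwards [hbox] with p hp t
      exact (bound_all hγ hL hG hS hzl hQ hp.1 hp.2.1 hp.2.2).1
  · refine contAux ?_ ?_ ((gauss_int_exp_abs (γ*(|p₀.1|+1)+(|p₀.1|+1)+1)).const_mul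
      ((L * (1 + ((p₀.2/2)^γ)⁻¹ + (p₀.2+1)^γ))*(p₀.2/2)⁻¹)) (fun t => cont_p_f1 hdF' t hz₀)
    · filter_upwards [hopen] with p hp
      exact (cont_t_f1 hdF' hp p.1).aestronglyMeasurable
    · filter_upwards [hbox] with p hp t
      exact (bound_all hγ hL hG hS hzl hQ hp.1 hp.2.1 hp.2.2).2.1
  · refine contAux ?_ ?_ ((gauss_int_exp_abs (γ*(|p₀.1|+1)+(|p₀.1|+1))).const_mul
      ((L * (1 + ((p₀.2/2)^γ)⁻¹ + (p₀.2+1)^γ))*((p₀.2/2)^2)⁻¹)) (fun t => cont_p_fz hdF' t hz₀)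
    · filter_upwards [hopen] with p hp
      exact (cont_t_fz hdF' hp p.1).aestronglyMeasurable
    · filter_upwards [hbox] with p hp t
      exact (bound_all hγ hL hG hS hzl hQ hp.1 hp.2.1 hp.2.2).2.2.1
  · refine contAux ?_ ?_ (((gauss_int_exp_abs (γ*(|p₀.1|+1)+2*(|p₀.1|+1)+2)).const_mul
        ((L * (1 + ((p₀.2/2)^γ)⁻¹ + (p₀.2+1)^γ))*((p₀.2/2)⁻¹*(p₀.2/2)⁻¹))).add
      ((gauss_int_exp_abs (γ*(|p₀.1|+1)+(|p₀.1|+1)+2)).const_mul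
        ((L * (1 + ((p₀.2/2)^γ)⁻¹ + (p₀.2+1)^γ))*(p₀.2/2)⁻¹)))
      (fun t => cont_p_f2 hdF' hF''cont t hz₀)
    · filter_upwards [hopen] with p hp
      exact (cont_t_f2 hdF' hF''cont hp p.1).aestronglyMeasurable
    · filter_upwards [hbox] with p hp t
      exact (bound_all hγ hL hG hS hzl hQ hp.1 hp.2.1 hp.2.2).2.2.2

end Param2

def Adef (F' F'' : ℝ → ℝ) (p : ℝ × ℝ) : ℝ :=
  if 0 < p.1 then (∫ t, f1 F' (Real.sqrt p.1) p.2 t ∂gν) / (2*Real.sqrt p.1)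
  else (1/2) * ∫ t, f2 F' F'' 0 p.2 t ∂gν

def Bdef (F' : ℝ → ℝ) (p : ℝ × ℝ) : ℝ := ∫ t, fz F' (Real.sqrt p.1) p.2 t ∂gν

def Φdef (F' F'' : ℝ → ℝ) (p : ℝ × ℝ) : ℝ × ℝ →L[ℝ] ℝ :=
  Adef F' F'' p • l1 + Bdef F' p • l2

section Phi

variable {F F' F'' : ℝ → ℝ} {L γ : ℝ}
variable (hdF : ∀ x > (0:ℝ), HasDerivAt F (F' x) x)
variable (hdF' : ∀ x > (0:ℝ), HasDerivAt F' (F'' x) x)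
variable (hF''cont : ContinuousOn F'' (Ioi 0))
variable (hγ : 0 < γ) (hL : 0 < L)
variable (hG : ∀ x > (0:ℝ), |F x| + |F' x| + |F'' x| ≤ L * (1 + x ^ γ + x ^ (-γ)))

include hdF hdF' hγ hL hG in
lemma claimI {p : ℝ × ℝ} (hp1 : 0 < p.1) (hp2 : 0 < p.2) :
    HasFDerivAt (fun q : ℝ × ℝ => ∫ t, f0 F (Real.sqrt q.1) q.2 t ∂gν)
      (Φdef F' F'' p) p := by
  have hsq : HasFDerivAt (fun q : ℝ × ℝ => Real.sqrt q.1) ((1/(2*Real.sqrt p.1)) • l1) p :=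
    (Real.hasDerivAt_sqrt hp1.ne').comp_hasFDerivAt p l1.hasFDerivAt
  have hm : HasFDerivAt (fun q : ℝ × ℝ => ((Real.sqrt q.1, q.2) : ℝ × ℝ))
      (((1/(2*Real.sqrt p.1)) • l1).prod l2) p :=
    hsq.prodMk l2.hasFDerivAt
  have hg := hasFDerivAt_g hdF hdF' hγ hL hG (s₀ := Real.sqrt p.1) (z₀ := p.2) hp2
  have hcomp := hg.comp p hm
  refine hcomp.congr_fderiv ?_
  apply ContinuousLinearMap.ext
  intro w
  have hsp : 0 < Real.sqrt p.1 := Real.sqrt_pos.2 hp1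
  simp only [Φdef, Adef, Bdef, if_pos hp1, ContinuousLinearMap.add_apply,
    ContinuousLinearMap.coe_smul', Pi.smul_apply, smul_eq_mul,
    ContinuousLinearMap.coe_comp', Function.comp_apply,
    ContinuousLinearMap.prod_apply, l1, l2,
    ContinuousLinearMap.coe_fst', ContinuousLinearMap.coe_snd']
  field_simp

include hdF hdF' hF''cont hγ hL hG in
lemma contB {p₀ : ℝ × ℝ} (hz₀ : 0 < p₀.2) : ContinuousAt (Bdef F') p₀ := by
  have hm : ContinuousAt (fun p : ℝ × ℝ => ((Real.sqrt p.1, p.2) : ℝ × ℝ)) p₀ :=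
    ((Real.continuous_sqrt.comp continuous_fst).prodMk continuous_snd).continuousAt
  have hc := (cont_ints hdF hdF' hF''cont hγ hL hG
    (p₀ := ((Real.sqrt p₀.1, p₀.2) : ℝ × ℝ)) hz₀).2.2.1
  show ContinuousAt ((fun q : ℝ × ℝ => ∫ t, fz F' q.1 q.2 t ∂gν) ∘
    (fun p : ℝ × ℝ => ((Real.sqrt p.1, p.2) : ℝ × ℝ))) p₀
  exact ContinuousAt.comp hc hm

include hdF hdF' hF''cont hγ hL hG in
lemma contPhi_interior {p₀ : ℝ × ℝ} (hp1 : 0 < p₀.1) (hz₀ : 0 < p₀.2) :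
    ContinuousAt (Φdef F' F'') p₀ := by
  have hm : ContinuousAt (fun p : ℝ × ℝ => ((Real.sqrt p.1, p.2) : ℝ × ℝ)) p₀ :=
    ((Real.continuous_sqrt.comp continuous_fst).prodMk continuous_snd).continuousAt
  have hA : ContinuousAt (Adef F' F'') p₀ := by
    have hbase : ContinuousAt
        (fun p : ℝ × ℝ => (∫ t, f1 F' (Real.sqrt p.1) p.2 t ∂gν) / (2*Real.sqrt p.1)) p₀ := by
      refine ContinuousAt.div ?_ ?_ ?_
      · show ContinuousAt ((fun q : ℝ × ℝ => ∫ t, f1 F' q.1 q.2 t ∂gν) ∘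
          (fun p : ℝ × ℝ => ((Real.sqrt p.1, p.2) : ℝ × ℝ))) p₀
        exact ContinuousAt.comp (cont_ints hdF hdF' hF''cont hγ hL hG
          (p₀ := ((Real.sqrt p₀.1, p₀.2) : ℝ × ℝ)) hz₀).2.1 hm
      · exact (continuous_const.mul (Real.continuous_sqrt.comp continuous_fst)).continuousAt
      · have := Real.sqrt_pos.2 hp1; positivity
    refine hbase.congr ?_
    filter_upwards [IsOpen.mem_nhds (isOpen_lt continuous_const continuous_fst) hp1] with q hq
    simp only [Adef, if_pos hq]
  exact (hA.smul continuousAt_const).add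
    ((contB hdF hdF' hF''cont hγ hL hG hz₀).smul continuousAt_const)

include hdF hdF' hF''cont hγ hL hG in
lemma hA0 {w : ℝ} (hw : 0 < w) : ∫ t, f1 F' 0 w t ∂gν = 0 := by
  have h1 : (fun t => f1 F' 0 w t) = fun t => (F' ((1:ℝ)/w) * ((1:ℝ)/w)) * t := by
    funext t
    show F' (Real.exp (0*t)/w) * (t * (Real.exp (0*t)/w)) = _
    rw [zero_mul, Real.exp_zero]
    ring
  rw [h1, integral_const_mul, gauss_integral_id, mul_zero]

include hdF hdF' hF''cont hγ hL hG in
lemma tendstoA {z : ℝ} (hz : 0 < z) :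
    Filter.Tendsto (Adef F' F'') (nhdsWithin ((0:ℝ),z) (Ici 0 ×ˢ Ioi 0))
      (nhds (Adef F' F'' (0,z))) := by
  have habs : ∀ a b : ℝ, |1/2*a - 1/2*b| = 1/2*|a-b| := by
    intro a b
    rw [show 1/2*a - 1/2*b = 1/2*(a-b) by ring, abs_mul, abs_of_pos]
    norm_num
  rw [Metric.tendsto_nhdsWithin_nhds]
  intro ε hε
  have hc := (cont_ints hdF hdF' hF''cont hγ hL hG (p₀ := (((0:ℝ),z) : ℝ × ℝ)) hz).2.2.2
  rw [Metric.continuousAt_iff] at hc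
  obtain ⟨δ₀, hδ₀, hc⟩ := hc ε hε
  refine ⟨min δ₀ (δ₀^2), lt_min hδ₀ (by positivity), ?_⟩
  rintro ⟨y, w⟩ hp hd
  obtain ⟨hy, hw⟩ : 0 ≤ y ∧ 0 < w := ⟨hp.1, hp.2⟩
  rw [Prod.dist_eq, max_lt_iff] at hd
  obtain ⟨hd1, hd2⟩ := hd
  have hd1' : |y| < min δ₀ (δ₀^2) := by rwa [Real.dist_eq, sub_zero] at hd1
  have hd2' : |w - z| < min δ₀ (δ₀^2) := by rwa [Real.dist_eq] at hd2
  rcases eq_or_lt_of_le hy with hy0 | hy0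
  · -- y = 0
    have hA1 : Adef F' F'' (y,w) = (1/2) * ∫ t, f2 F' F'' 0 w t ∂gν := by
      unfold Adef
      rw [if_neg (by simp [← hy0])]
    have hA2 : Adef F' F'' ((0:ℝ),z) = (1/2) * ∫ t, f2 F' F'' 0 z t ∂gν := by
      unfold Adef
      rw [if_neg (by simp)]
    rw [hA1, hA2, Real.dist_eq]
    have hkey : dist (((0:ℝ),w) : ℝ × ℝ) ((0:ℝ),z) < δ₀ := by
      rw [Prod.dist_eq, Real.dist_eq, Real.dist_eq]
      simp only [sub_zero, abs_zero]
      exact max_lt hδ₀ (lt_of_lt_of_le hd2' (min_le_left _ _))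
    have := hc hkey
    rw [Real.dist_eq] at this
    calc |1/2 * ∫ t, f2 F' F'' 0 w t ∂gν - 1/2 * ∫ t, f2 F' F'' 0 z t ∂gν|
        = (1/2) * |(∫ t, f2 F' F'' 0 w t ∂gν) - ∫ t, f2 F' F'' 0 z t ∂gν| := by
          exact habs _ _
      _ < ε := by nlinarith [abs_nonneg ((∫ t, f2 F' F'' 0 w t ∂gν) - ∫ t, f2 F' F'' 0 z t ∂gν)]
  · -- 0 < y
    have hsy : 0 < Real.sqrt y := Real.sqrt_pos.2 hy0
    have hφd : ∀ σ : ℝ, HasDerivAt (fun s => ∫ t, f1 F' s w t ∂gν)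
        (∫ t, f2 F' F'' σ w t ∂gν) σ :=
      fun σ => hasDerivAt_g1s hdF' hF''cont hγ hL hG hw
    obtain ⟨ξ, hξ, hξeq⟩ := exists_hasDerivAt_eq_slope (fun s => ∫ t, f1 F' s w t ∂gν)
      (fun σ => ∫ t, f2 F' F'' σ w t ∂gν) hsy
      (fun σ _ => (hφd σ).continuousAt.continuousWithinAt)
      (fun σ _ => hφd σ)
    rw [hA0 hdF hdF' hF''cont hγ hL hG hw, sub_zero, sub_zero] at hξeq
    have hAval : Adef F' F'' (y,w) = (1/2) * ∫ t, f2 F' F'' ξ w t ∂gν := by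
      unfold Adef
      rw [if_pos (show (0:ℝ) < (y,w).1 from hy0), hξeq]
      ring
    have hA2 : Adef F' F'' ((0:ℝ),z) = (1/2) * ∫ t, f2 F' F'' 0 z t ∂gν := by
      unfold Adef
      rw [if_neg (by simp)]
    have hξδ : |ξ| < δ₀ := by
      have h1 : ξ < Real.sqrt y := hξ.2
      have h2 : Real.sqrt y < δ₀ := by
        have hyδ : y < δ₀^2 := by
          have : |y| < δ₀^2 := lt_of_lt_of_le hd1' (min_le_right _ _)
          rwa [abs_of_nonneg hy] at this
        calc Real.sqrt y < Real.sqrt (δ₀^2) := Real.sqrt_lt_sqrt hy hyδ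
        _ = δ₀ := Real.sqrt_sq hδ₀.le
      rw [abs_of_pos hξ.1]
      linarith
    have hkey : dist ((ξ,w) : ℝ × ℝ) ((0:ℝ),z) < δ₀ := by
      rw [Prod.dist_eq, Real.dist_eq, Real.dist_eq, sub_zero]
      exact max_lt hξδ (lt_of_lt_of_le hd2' (min_le_left _ _))
    have := hc hkey
    rw [Real.dist_eq] at this
    rw [hAval, hA2, Real.dist_eq]
    calc |1/2 * ∫ t, f2 F' F'' ξ w t ∂gν - 1/2 * ∫ t, f2 F' F'' 0 z t ∂gν|
        = (1/2) * |(∫ t, f2 F' F'' ξ w t ∂gν) - ∫ t, f2 F' F'' 0 z t ∂gν| := by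
          exact habs _ _
      _ < ε := by nlinarith [abs_nonneg ((∫ t, f2 F' F'' ξ w t ∂gν) - ∫ t, f2 F' F'' 0 z t ∂gν)]

include hdF hdF' hF''cont hγ hL hG in
lemma tendstoPhi {z : ℝ} (hz : 0 < z) :
    Filter.Tendsto (Φdef F' F'') (nhdsWithin ((0:ℝ),z) (Ici 0 ×ˢ Ioi 0))
      (nhds (Φdef F' F'' (0,z))) := by
  have hB : Filter.Tendsto (Bdef F') (nhdsWithin ((0:ℝ),z) (Ici 0 ×ˢ Ioi 0))
      (nhds (Bdef F' (0,z))) :=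
    (contB hdF hdF' hF''cont hγ hL hG (p₀ := (((0:ℝ),z) : ℝ × ℝ)) hz).continuousWithinAt
  exact ((tendstoA hdF hdF' hF''cont hγ hL hG hz).smul_const l1).add (hB.smul_const l2)

end Phi

section Claim2

variable {F F' F'' : ℝ → ℝ} {L γ : ℝ}
variable (hdF : ∀ x > (0:ℝ), HasDerivAt F (F' x) x)
variable (hdF' : ∀ x > (0:ℝ), HasDerivAt F' (F'' x) x)
variable (hF''cont : ContinuousOn F'' (Ioi 0))
variable (hγ : 0 < γ) (hL : 0 < L)
variable (hG : ∀ x > (0:ℝ), |F x| + |F' x| + |F'' x| ≤ L * (1 + x ^ γ + x ^ (-γ)))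

include hdF hdF' hF''cont hγ hL hG in
lemma claimII {z : ℝ} (hz : 0 < z) :
    HasFDerivWithinAt (fun q : ℝ × ℝ => ∫ t, f0 F (Real.sqrt q.1) q.2 t ∂gν)
      (Φdef F' F'' (0,z)) (closure (Ioi 0 ×ˢ Ioo (z/2) (z+1))) ((0:ℝ),z) := by
  apply hasFDerivWithinAt_closure_of_tendsto_fderiv
  · intro q hq
    exact (claimI hdF hdF' hγ hL hG hq.1 ((half_pos hz).trans hq.2.1)).differentiableAt.differentiableWithinAt
  · exact (convex_Ioi 0).prod (convex_Ioo _ _)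
  · exact (isOpen_Ioi).prod isOpen_Ioo
  · intro q hq
    rw [closure_prod_eq, closure_Ioi, closure_Ioo (by linarith : z/2 ≠ z+1)] at hq
    have hq2 : 0 < q.2 := lt_of_lt_of_le (half_pos hz) hq.2.1
    have hc : ContinuousAt (fun q : ℝ × ℝ => ∫ t, f0 F (Real.sqrt q.1) q.2 t ∂gν) q := by
      show ContinuousAt ((fun r : ℝ × ℝ => ∫ t, f0 F r.1 r.2 t ∂gν) ∘
        (fun p : ℝ × ℝ => ((Real.sqrt p.1, p.2) : ℝ × ℝ))) q
      exact ContinuousAt.comp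
        ((cont_ints hdF hdF' hF''cont hγ hL hG (p₀ := ((Real.sqrt q.1, q.2) : ℝ × ℝ)) hq2).1)
        ((Real.continuous_sqrt.comp continuous_fst).prodMk continuous_snd).continuousAt
    exact hc.continuousWithinAt
  · have hsub : (Ioi (0:ℝ) ×ˢ Ioo (z/2) (z+1)) ⊆ Ici 0 ×ˢ Ioi 0 := by
      intro q hq
      exact ⟨mem_Ici.2 (le_of_lt (mem_Ioi.1 hq.1)), (half_pos hz).trans hq.2.1⟩
    refine Filter.Tendsto.congr' ?_
      ((tendstoPhi hdF hdF' hF''cont hγ hL hG hz).mono_left (nhdsWithin_mono _ hsub))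
    filter_upwards [self_mem_nhdsWithin] with q hq
    exact ((claimI hdF hdF' hγ hL hG hq.1 ((half_pos hz).trans hq.2.1)).fderiv).symm

end Claim2

end StmtAux

end StmtAux

open MeasureTheory ProbabilityTheory Set

/-- The differentiability claim in the proof of Lemma 4.1: `h` is `C¹` on
`[0,∞) × (0,∞)` and `h_z(y,z) = -(1/z²) ∫ F'(e^{√y t}/z) e^{√y t} dN(t) < 0`. -/
theorem stmt_3 (F F' F'' : ℝ → ℝ)
    (hdF : ∀ x > (0:ℝ), HasDerivAt F (F' x) x)
    (hdF' : ∀ x > (0:ℝ), HasDerivAt F' (F'' x) x)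
    (hF''cont : ContinuousOn F'' (Ioi 0))
    (hF1 : F 1 = 0)
    (hF'pos : ∀ x > (0:ℝ), 0 < F' x)
    (hF''neg : ∀ x > (0:ℝ), F'' x < 0)
    (hgrowth : ∃ L : ℝ, 0 < L ∧ ∃ γ : ℝ, 0 < γ ∧ ∀ x > (0:ℝ),
      |F x| + |F' x| + |F'' x| ≤ L * (1 + x ^ γ + x ^ (-γ))) :
    ContDiffOn ℝ 1
      (fun p : ℝ × ℝ => ∫ t, F (Real.exp (Real.sqrt p.1 * t) / p.2) ∂(gaussianReal 0 1))
      (Ici 0 ×ˢ Ioi 0) ∧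
    ∀ y ∈ Ici (0:ℝ), ∀ z ∈ Ioi (0:ℝ),
      HasDerivAt (fun z' : ℝ => ∫ t, F (Real.exp (Real.sqrt y * t) / z') ∂(gaussianReal 0 1))
        (-(1 / z ^ 2) *
          ∫ t, F' (Real.exp (Real.sqrt y * t) / z) * Real.exp (Real.sqrt y * t)
            ∂(gaussianReal 0 1)) z ∧
      -(1 / z ^ 2) *
        (∫ t, F' (Real.exp (Real.sqrt y * t) / z) * Real.exp (Real.sqrt y * t)
          ∂(gaussianReal 0 1)) < 0 := by
  classical
  obtain ⟨L, hL, γ, hγ, hG⟩ := hgrowth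
  constructor
  · -- C¹ part
    intro p hp
    have hp1 : 0 ≤ p.1 := hp.1
    have hp2 : 0 < p.2 := hp.2
    rw [show (1 : WithTop ℕ∞) = 0 + 1 from (zero_add 1).symm,
      contDiffWithinAt_succ_iff_hasFDerivWithinAt (by simp)]
    refine ⟨(Ici 0 ×ˢ Ioi 0) ∩ Metric.ball p (p.2/2), ?_, ?_, StmtAux.Φdef F' F'', ?_, ?_⟩
    · rw [insert_eq_self.2 hp]
      exact inter_mem_nhdsWithin _ (Metric.ball_mem_nhds _ (by linarith))
    · intro h
      simp at h
    · rintro q ⟨hqS, hqB⟩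
      have hq2 : 0 < q.2 := hqS.2
      rcases eq_or_lt_of_le (mem_Ici.1 hqS.1) with hq0 | hq0
      · have hcl := StmtAux.claimII hdF hdF' hF''cont hγ hL hG (z := q.2) hq2
        have hq' : (((0:ℝ), q.2) : ℝ × ℝ) = q := by
          ext
          · exact hq0
          · rfl
        rw [hq'] at hcl
        refine hcl.mono_of_mem_nhdsWithin ?_
        rw [closure_prod_eq, closure_Ioi, closure_Ioo (by linarith : q.2/2 ≠ q.2+1)]
        refine mem_nhdsWithin.2 ⟨(univ : Set ℝ) ×ˢ Ioo (q.2/2) (q.2+1),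
          isOpen_univ.prod isOpen_Ioo, ⟨mem_univ _, by constructor <;> linarith⟩, ?_⟩
        rintro r ⟨hr1, hr2⟩
        exact ⟨hr2.1.1, ⟨le_of_lt hr1.2.1, le_of_lt hr1.2.2⟩⟩
      · exact (StmtAux.claimI hdF hdF' hγ hL hG hq0 hq2).hasFDerivWithinAt
    · refine ContDiffOn.contDiffWithinAt ?_ ⟨hp, Metric.mem_ball_self (by linarith)⟩
      rw [contDiffOn_zero]
      rintro q ⟨hqS, hqB⟩
      have hq2 : 0 < q.2 := hqS.2
      rcases eq_or_lt_of_le (mem_Ici.1 hqS.1) with hq0 | hq0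
      · have ht := StmtAux.tendstoPhi hdF hdF' hF''cont hγ hL hG (z := q.2) hq2
        have hq' : (((0:ℝ), q.2) : ℝ × ℝ) = q := by
          ext
          · exact hq0
          · rfl
        rw [hq'] at ht
        exact ht.mono_left (nhdsWithin_mono _ inter_subset_left)
      · exact (StmtAux.contPhi_interior hdF hdF' hF''cont hγ hL hG hq0 hq2).continuousWithinAt
  · -- derivative in z and negativity
    intro y hy z hz
    have hz' : (0:ℝ) < z := hz
    have hre : ∫ t, StmtAux.fz F' (Real.sqrt y) z t ∂(gaussianReal 0 1)
        = -(1/z^2) * ∫ t, F' (Real.exp (Real.sqrt y*t)/z) * Real.exp (Real.sqrt y*t)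
            ∂(gaussianReal 0 1) := by
      rw [← integral_const_mul]
      congr 1
      funext t
      show F' (Real.exp (Real.sqrt y*t)/z) * (Real.exp (Real.sqrt y*t) * -((z^2)⁻¹)) = _
      ring
    have hpos : 0 < ∫ t, F' (Real.exp (Real.sqrt y*t)/z) * Real.exp (Real.sqrt y*t)
        ∂(gaussianReal 0 1) := by
      have hint : Integrable
          (fun t => F' (Real.exp (Real.sqrt y*t)/z) * Real.exp (Real.sqrt y*t))
          (gaussianReal 0 1) := by
        have h := (StmtAux.integrable_fz hγ hL hG hdF' (s := Real.sqrt y) hz').const_mul (-(z^2))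
        refine h.congr (Filter.Eventually.of_forall fun t => ?_)
        show -(z^2) * (F' (Real.exp (Real.sqrt y*t)/z) * (Real.exp (Real.sqrt y*t) * -((z^2)⁻¹)))
          = _
        field_simp
      have hposptw : ∀ t : ℝ, 0 < F' (Real.exp (Real.sqrt y*t)/z) * Real.exp (Real.sqrt y*t) :=
        fun t => mul_pos (hF'pos _ (div_pos (Real.exp_pos _) hz')) (Real.exp_pos _)
      rw [integral_pos_iff_support_of_nonneg_ae
        (Filter.Eventually.of_forall fun t => (hposptw t).le) hint]
      have hsupp : Function.support
          (fun t => F' (Real.exp (Real.sqrt y*t)/z) * Real.exp (Real.sqrt y*t)) = univ := by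
        ext t
        simp only [Function.mem_support, mem_univ, iff_true]
        exact (hposptw t).ne'
      rw [hsupp, measure_univ]
      norm_num
    refine ⟨?_, ?_⟩
    · have hline : HasDerivAt (fun z' : ℝ => ((Real.sqrt y, z') : ℝ × ℝ))
          (((0:ℝ),(1:ℝ))) z :=
        (hasDerivAt_const z _).prodMk (hasDerivAt_id z)
      have hFD := (StmtAux.hasFDerivAt_g hdF hdF' hγ hL hG (s₀ := Real.sqrt y)
        (z₀ := z) hz').comp_hasDerivAt z hline
      have hval : (((∫ t, StmtAux.f1 F' (Real.sqrt y) z t ∂(gaussianReal 0 1)) • StmtAux.l1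
          + (∫ t, StmtAux.fz F' (Real.sqrt y) z t ∂(gaussianReal 0 1)) • StmtAux.l2) :
            ℝ × ℝ →L[ℝ] ℝ) (((0:ℝ),(1:ℝ)) : ℝ × ℝ)
          = ∫ t, StmtAux.fz F' (Real.sqrt y) z t ∂(gaussianReal 0 1) := by
        simp [StmtAux.l1, StmtAux.l2]
      rw [hval, hre] at hFD
      exact hFD
    · have h1 : (0:ℝ) < 1/z^2 := by positivity
      exact mul_neg_of_neg_of_pos (neg_lt_zero.2 h1) hpos
end

section
/- Assume Assumption (F). Define h(y,z) = ∫_ℝ F(e^{√y t}/z) dN(t) for y ≥ 0 and z > 0, where N is the standard Gaussian (normal N(0,1)) probability measure on ℝ. Then for every z > 0, lim_{y → 0⁺} (h(y,z) − h(0,z))/y = (1/2)(F''(1/z)·z^{−2} + F'(1/z)·z^{−1}); that is, the right derivative of y ↦ h(y,z) at y = 0 equals (1/2)(F''(1/z)/z² + F'(1/z)/z). -/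
open MeasureTheory ProbabilityTheory Set Filter Real
open scoped ENNReal NNReal Topology

/-- Second-order mean value theorem (Taylor with Lagrange remainder). -/
lemma taylor2 {g g' g'' : ℝ → ℝ} {s : ℝ} (hs : 0 < s)
    (hg : ∀ u ∈ Icc 0 s, HasDerivAt g (g' u) u)
    (hg' : ∀ u ∈ Icc 0 s, HasDerivAt g' (g'' u) u) :
    ∃ u ∈ Ioo 0 s, g s = g 0 + s * g' 0 + s ^ 2 / 2 * g'' u := by
  set A : ℝ := (g s - g 0 - s * g' 0) * 2 / s ^ 2 with hA
  set ψ : ℝ → ℝ := fun u => g s - g u - (s - u) * g' u - A * (s - u) ^ 2 / 2 with hψ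
  have hψd : ∀ u ∈ Icc (0:ℝ) s, HasDerivAt ψ ((s - u) * (A - g'' u)) u := by
    intro u hu
    have h1 := hg u hu
    have h2 := hg' u hu
    have hd : HasDerivAt ψ
        (0 - g' u - ((-1) * g' u + (s - u) * g'' u) - A * (↑(2:ℕ) * (s - u) ^ 1 * (-1)) / 2) u := by
      refine ((((hasDerivAt_const u (g s)).sub h1).sub ?_).sub ?_)
      · exact (((hasDerivAt_id u).const_sub s)).mul h2
      · exact ((((hasDerivAt_id u).const_sub s).pow 2).const_mul A).div_const 2
    convert hd using 1
    push_cast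
    ring
  have hψc : ContinuousOn ψ (Icc 0 s) := fun u hu => (hψd u hu).continuousAt.continuousWithinAt
  have hψ0 : ψ 0 = 0 := by
    simp only [hψ, hA]
    field_simp
    ring
  have hψs : ψ s = 0 := by simp [hψ]
  obtain ⟨u, hu, hu0⟩ := exists_hasDerivAt_eq_zero hs hψc (by rw [hψ0, hψs])
    (fun x hx => hψd x ⟨hx.1.le, hx.2.le⟩)
  refine ⟨u, hu, ?_⟩
  have hsu : s - u ≠ 0 := by have := hu.2; intro h; linarith [hu.2]
  have hAu : A = g'' u := by
    rcases mul_eq_zero.1 hu0 with h | h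
    · exact absurd h hsu
    · linarith
  have hs2 : (s:ℝ) ^ 2 ≠ 0 := pow_ne_zero _ hs.ne'
  rw [← hAu, hA]
  field_simp
  ring

lemma gauss_pdf_eq (x : ℝ) :
    gaussianPDFReal 0 1 x = (Real.sqrt (2 * π))⁻¹ * rexp (-x ^ 2 / 2) := by
  simp [gaussianPDFReal]

lemma gauss_integral_eq (g : ℝ → ℝ) :
    ∫ x, g x ∂(gaussianReal 0 1) = ∫ x, gaussianPDFReal 0 1 x * g x := by
  rw [gaussianReal_of_var_ne_zero 0 one_ne_zero]
  have h : (gaussianPDF 0 1) = fun x => ((gaussianPDFReal 0 1 x).toNNReal : ℝ≥0∞) := rfl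
  rw [h, integral_withDensity_eq_integral_smul ((measurable_gaussianPDFReal 0 1).real_toNNReal) g]
  congr 1 with x
  simp [NNReal.smul_def, Real.coe_toNNReal _ (gaussianPDFReal_nonneg 0 1 x)]

lemma gauss_integrable_iff (g : ℝ → ℝ) :
    Integrable g (gaussianReal 0 1) ↔
      Integrable (fun x => gaussianPDFReal 0 1 x * g x) volume := by
  rw [gaussianReal_of_var_ne_zero 0 one_ne_zero]
  have h : (gaussianPDF 0 1) = fun x => ((gaussianPDFReal 0 1 x).toNNReal : ℝ≥0∞) := rfl
  rw [h, integrable_withDensity_iff_integrable_smul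
    ((measurable_gaussianPDFReal 0 1).real_toNNReal)]
  constructor <;> intro hi <;> refine hi.congr (ae_of_all _ fun x => ?_) <;>
    simp [NNReal.smul_def, Real.coe_toNNReal _ (gaussianPDFReal_nonneg 0 1 x)]

lemma integrable_exp_mul_gauss (a : ℝ) :
    Integrable (fun x => rexp (a * x)) (gaussianReal 0 1) := by
  rw [gauss_integrable_iff]
  have h : ∀ x : ℝ, gaussianPDFReal 0 1 x * rexp (a * x)
      = ((Real.sqrt (2 * π))⁻¹ * rexp (a ^ 2 / 2)) * rexp (-(1/2) * (x - a) ^ 2) := by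
    intro x
    rw [gauss_pdf_eq, mul_assoc, ← Real.exp_add, mul_assoc, ← Real.exp_add]
    congr 1
    ring
  simp only [h]
  exact ((integrable_exp_neg_mul_sq (by norm_num : (0:ℝ) < 1/2)).comp_sub_right a).const_mul _

lemma integrable_exp_abs_gauss (a : ℝ) :
    Integrable (fun x => rexp (a * |x|)) (gaussianReal 0 1) := by
  refine ((integrable_exp_mul_gauss a).add (integrable_exp_mul_gauss (-a))).mono'
    (Continuous.aestronglyMeasurable (by continuity)) (ae_of_all _ fun x => ?_)
  rw [Real.norm_eq_abs, abs_of_pos (Real.exp_pos _)]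
  rcases abs_cases x with ⟨h, _⟩ | ⟨h, _⟩
  · rw [h]; exact le_add_of_nonneg_right (Real.exp_pos _).le
  · have hx : a * |x| = -a * x := by rw [h]; ring
    rw [hx]; exact le_add_of_nonneg_left (Real.exp_pos _).le

lemma integrable_id_gauss : Integrable (fun x : ℝ => x) (gaussianReal 0 1) := by
  refine (integrable_exp_abs_gauss 1).mono'
    measurable_id.aestronglyMeasurable (ae_of_all _ fun x => ?_)
  rw [Real.norm_eq_abs, one_mul]
  linarith [Real.add_one_le_exp |x|]

lemma integrable_sq_gauss : Integrable (fun x : ℝ => x ^ 2) (gaussianReal 0 1) := by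
  refine ((integrable_exp_abs_gauss 1).const_mul 4).mono'
    (by fun_prop) (ae_of_all _ fun x => ?_)
  rw [Real.norm_eq_abs, one_mul, abs_of_nonneg (sq_nonneg x)]
  have h1 := Real.add_one_le_exp (|x|/2)
  have h2 : rexp (|x|/2) * rexp (|x|/2) = rexp |x| := by
    rw [← Real.exp_add]; ring_nf
  have h3 : |x| * |x| = x ^ 2 := abs_mul_abs_self x ▸ (sq x).symm
  nlinarith [abs_nonneg x, Real.exp_pos (|x|/2)]

lemma moment_one_gauss : ∫ x, x ∂(gaussianReal 0 1) = 0 := by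
  have hmap := gaussianReal_map_const_mul (μ := 0) (v := 1) (-1)
  have hv : (⟨(-1:ℝ)^2, sq_nonneg _⟩ : ℝ≥0) * 1 = 1 := by
    ext; norm_num
  rw [mul_zero] at hmap
  replace hmap : Measure.map (fun x : ℝ => -1 * x) (gaussianReal 0 1) = gaussianReal 0 1 := by
    rw [hmap]; congr 1
  have h1 : ∫ x, x ∂(gaussianReal 0 1) = ∫ x, (-1) * x ∂(gaussianReal 0 1) := by
    have h := integral_map (μ := gaussianReal 0 1) (φ := fun x : ℝ => -1 * x)
      (f := fun x : ℝ => x) (by fun_prop)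
      (by rw [hmap]; exact measurable_id.aestronglyMeasurable)
    rw [hmap] at h
    exact h
  have h2 : ∫ x, (-1:ℝ) * x ∂(gaussianReal 0 1) = - ∫ x, x ∂(gaussianReal 0 1) := by
    rw [integral_const_mul]; ring
  linarith [h1, h2.symm ▸ h1]

lemma integrable_sq_exp_volume :
    Integrable (fun x : ℝ => x ^ 2 * rexp (-x ^ 2 / 2)) volume := by
  refine ((integrable_exp_neg_mul_sq (by norm_num : (0:ℝ) < 1/4)).const_mul 4).mono'
    (((continuous_pow 2).mul (by continuity)).aestronglyMeasurable) (ae_of_all _ fun x => ?_)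
  rw [Real.norm_eq_abs, abs_of_nonneg (by positivity)]
  have h1 : x ^ 2 / 4 ≤ rexp (x ^ 2 / 4) := by
    linarith [Real.add_one_le_exp (x ^ 2 / 4)]
  have h2 : rexp (x ^ 2 / 4) * rexp (-x ^ 2 / 2) = rexp (-(1/4) * x ^ 2) := by
    rw [← Real.exp_add]; ring_nf
  calc x ^ 2 * rexp (-x ^ 2 / 2) ≤ 4 * rexp (x ^ 2 / 4) * rexp (-x ^ 2 / 2) := by
        have := Real.exp_pos (-x ^ 2 / 2)
        nlinarith
    _ = 4 * rexp (-(1/4) * x ^ 2) := by rw [mul_assoc, h2]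

lemma integral_sq_exp_volume :
    ∫ x : ℝ, x ^ 2 * rexp (-x ^ 2 / 2) = Real.sqrt (2 * π) := by
  have hgauss : Integrable (fun x : ℝ => rexp (-x ^ 2 / 2)) volume := by
    have := integrable_exp_neg_mul_sq (by norm_num : (0:ℝ) < 1/2)
    refine this.congr (ae_of_all _ fun x => ?_)
    ring_nf
  have hderiv : ∀ x : ℝ, HasDerivAt (fun x : ℝ => -x * rexp (-x ^ 2 / 2))
      ((x ^ 2 - 1) * rexp (-x ^ 2 / 2)) x := by
    intro x
    have hexp : HasDerivAt (fun x : ℝ => rexp (-x ^ 2 / 2))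
        (rexp (-x ^ 2 / 2) * (-(↑(2:ℕ) * x ^ 1) / 2)) x :=
      (((hasDerivAt_pow 2 x).neg).div_const 2).exp
    have h2 := ((hasDerivAt_id x).neg).mul hexp
    exact h2.congr_deriv (by simp only [Pi.neg_apply, id_eq]; push_cast; ring)
  have hint : Integrable (fun x : ℝ => (x ^ 2 - 1) * rexp (-x ^ 2 / 2)) volume := by
    have h2 := integrable_sq_exp_volume.sub hgauss
    refine h2.congr (ae_of_all _ fun x => ?_)
    simp only [Pi.sub_apply]
    ring
  have haux : Tendsto (fun x : ℝ => x * rexp (-x ^ 2 / 2)) atTop (𝓝 0) := by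
    have hb : Tendsto (fun u : ℝ => 2 * (u * rexp (-u)) ) atTop (𝓝 (2 * 0)) :=
      (tendsto_pow_mul_exp_neg_atTop_nhds_zero 1).congr (by simp) |>.const_mul 2
    rw [mul_zero] at hb
    have hc : Tendsto (fun x : ℝ => x / 2) atTop atTop := tendsto_id.atTop_div_const (by norm_num)
    refine squeeze_zero' (eventually_atTop.2 ⟨0, fun x hx => by positivity⟩)
      (eventually_atTop.2 ⟨1, fun x hx => ?_⟩) (hb.comp hc)
    show x * rexp (-x ^ 2 / 2) ≤ 2 * (x / 2 * rexp (-(x / 2)))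
    have h1 : rexp (-x ^ 2 / 2) ≤ rexp (-(x / 2)) := by
      apply Real.exp_le_exp.2; nlinarith
    calc x * rexp (-x ^ 2 / 2) ≤ x * rexp (-(x / 2)) :=
          mul_le_mul_of_nonneg_left h1 (by linarith)
      _ = 2 * (x / 2 * rexp (-(x / 2))) := by ring
  have htop : Tendsto (fun x : ℝ => -x * rexp (-x ^ 2 / 2)) atTop (𝓝 0) := by
    have := haux.neg
    rw [neg_zero] at this
    exact this.congr (fun x => by ring)
  have hbot : Tendsto (fun x : ℝ => -x * rexp (-x ^ 2 / 2)) atBot (𝓝 0) := by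
    have h := haux.comp tendsto_neg_atBot_atTop
    exact h.congr (fun x => by simp [Function.comp, neg_sq])
  have key := integral_of_hasDerivAt_of_tendsto hderiv hint hbot htop
  rw [sub_zero] at key
  have hsplit : ∫ x : ℝ, (x ^ 2 - 1) * rexp (-x ^ 2 / 2)
      = (∫ x : ℝ, x ^ 2 * rexp (-x ^ 2 / 2)) - ∫ x : ℝ, rexp (-x ^ 2 / 2) := by
    rw [← integral_sub integrable_sq_exp_volume hgauss]
    congr 1 with x
    ring
  have hg : ∫ x : ℝ, rexp (-x ^ 2 / 2) = Real.sqrt (2 * π) := by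
    have h := integral_gaussian (1/2)
    have h2 : ∀ x : ℝ, rexp (-(1/2) * x ^ 2) = rexp (-x ^ 2 / 2) := fun x => by ring_nf
    simp only [h2] at h
    rw [h]
    congr 1
    ring
  linarith [key, hsplit, hg]

lemma moment_two_gauss : ∫ x, x ^ 2 ∂(gaussianReal 0 1) = 1 := by
  rw [gauss_integral_eq]
  have h : ∀ x : ℝ, gaussianPDFReal 0 1 x * x ^ 2
      = (Real.sqrt (2 * π))⁻¹ * (x ^ 2 * rexp (-x ^ 2 / 2)) := by
    intro x
    simp [gaussianPDFReal]
    ring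
  simp only [h]
  rw [integral_const_mul, integral_sq_exp_volume, inv_mul_cancel₀]
  positivity

lemma sq_le_four_mul_exp_abs (t : ℝ) : t ^ 2 ≤ 4 * rexp |t| := by
  have h1 := Real.add_one_le_exp (|t|/2)
  have h2 : rexp (|t|/2) * rexp (|t|/2) = rexp |t| := by
    rw [← Real.exp_add]; ring_nf
  have h3 : |t| * |t| = t ^ 2 := abs_mul_abs_self t ▸ (sq t).symm
  nlinarith [abs_nonneg t, Real.exp_pos (|t|/2)]

/-- The boundary-derivative computation in the proof of Lemma 4.1: the right
derivative of `y ↦ h(y,z)` at `y = 0` equals `(1/2)(F''(1/z)/z² + F'(1/z)/z)`. -/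
theorem stmt_4 (F F' F'' : ℝ → ℝ)
    (hdF : ∀ x > (0:ℝ), HasDerivAt F (F' x) x)
    (hdF' : ∀ x > (0:ℝ), HasDerivAt F' (F'' x) x)
    (hF''cont : ContinuousOn F'' (Ioi 0))
    (hF1 : F 1 = 0)
    (hF'pos : ∀ x > (0:ℝ), 0 < F' x)
    (hF''neg : ∀ x > (0:ℝ), F'' x < 0)
    (hgrowth : ∃ L : ℝ, 0 < L ∧ ∃ γ : ℝ, 0 < γ ∧ ∀ x > (0:ℝ),
      |F x| + |F' x| + |F'' x| ≤ L * (1 + x ^ γ + x ^ (-γ))) :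
    ∀ z > (0:ℝ),
      Tendsto
        (fun y : ℝ =>
          ((∫ t, F (Real.exp (Real.sqrt y * t) / z) ∂(gaussianReal 0 1)) -
            ∫ t, F (Real.exp (Real.sqrt 0 * t) / z) ∂(gaussianReal 0 1)) / y)
        (nhdsWithin 0 (Ioi 0))
        (nhds ((1 / 2) * (F'' (1 / z) / z ^ 2 + F' (1 / z) / z))) := by
  intro z hz
  obtain ⟨L, hL, γ, hγ, hgr⟩ := hgrowth
  set c : ℝ := F' (1/z) / z with hc_def
  set A : ℝ := F'' (1/z) / z ^ 2 + F' (1/z) / z with hA_def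
  set M : ℝ := L * (1 + z ^ (-γ) + z ^ γ) with hM_def
  set K : ℝ := 4 * M * (1/z^2 + 1/z) with hK_def
  set b : ℝ := γ + 3 with hb_def
  set q : ℝ → ℝ → ℝ := fun t u =>
    F'' (rexp (u*t)/z) * (t * (rexp (u*t)/z))^2 + F' (rexp (u*t)/z) * (t^2 * (rexp (u*t)/z))
    with hq_def
  set R : ℝ → ℝ → ℝ := fun y t =>
    (F (rexp (Real.sqrt y * t)/z) - F (1/z) - Real.sqrt y * t * c)/y with hR_def
  have hz1 : (0:ℝ) < 1/z := by positivity
  have hM : 0 < M := by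
    rw [hM_def]
    have := Real.rpow_pos_of_pos hz (-γ)
    have := Real.rpow_pos_of_pos hz γ
    positivity
  have hK : 0 < K := by rw [hK_def]; positivity
  have hxpos : ∀ u t : ℝ, 0 < rexp (u*t)/z := fun u t => by positivity
  -- rpow of exp/z
  have hrpow : ∀ (s w : ℝ), (rexp s / z) ^ w = rexp (s*w) * z ^ (-w) := by
    intro s w
    rw [Real.rpow_def_of_pos (by positivity), Real.log_div (Real.exp_ne_zero s) hz.ne',
      Real.log_exp, Real.rpow_def_of_pos hz, ← Real.exp_add]
    ring_nf
  have hut : ∀ u ∈ Icc (0:ℝ) 1, ∀ t : ℝ, u * t ≤ |t| := by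
    intro u hu t
    calc u * t ≤ |u * t| := le_abs_self _
      _ = u * |t| := by rw [abs_mul, abs_of_nonneg hu.1]
      _ ≤ 1 * |t| := by gcongr; exact hu.2
      _ = |t| := one_mul _
  have hut' : ∀ u ∈ Icc (0:ℝ) 1, ∀ t : ℝ, -(u * t) ≤ |t| := by
    intro u hu t
    have := hut u hu (-t)
    rw [abs_neg] at this
    linarith [this, mul_neg u t ▸ this]
  -- growth bound
  have hFbound : ∀ u ∈ Icc (0:ℝ) 1, ∀ t : ℝ,
      |F (rexp (u*t)/z)| + |F' (rexp (u*t)/z)| + |F'' (rexp (u*t)/z)|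
        ≤ M * rexp (γ * |t|) := by
    intro u hu t
    refine le_trans (hgr _ (hxpos u t)) ?_
    rw [hrpow, hrpow, neg_neg]
    have h1 : rexp (u*t*γ) ≤ rexp (γ * |t|) := by
      apply Real.exp_le_exp.2
      have := hut u hu t
      nlinarith
    have h2 : rexp (u*t*(-γ)) ≤ rexp (γ * |t|) := by
      apply Real.exp_le_exp.2
      have := hut' u hu t
      nlinarith
    have h3 : (1:ℝ) ≤ rexp (γ*|t|) := by
      rw [← Real.exp_zero]
      apply Real.exp_le_exp.2
      positivity
    have hp1 : (0:ℝ) < z ^ (-γ) := Real.rpow_pos_of_pos hz _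
    have hp2 : (0:ℝ) < z ^ γ := Real.rpow_pos_of_pos hz _
    calc L * (1 + rexp (u*t*γ) * z ^ (-γ) + rexp (u*t*(-γ)) * z ^ γ)
        ≤ L * (rexp (γ*|t|) + rexp (γ*|t|) * z ^ (-γ) + rexp (γ*|t|) * z ^ γ) := by
          gcongr
      _ = M * rexp (γ * |t|) := by rw [hM_def]; ring
  have hexple : ∀ u ∈ Icc (0:ℝ) 1, ∀ t : ℝ, rexp (u*t) ≤ rexp |t| :=
    fun u hu t => Real.exp_le_exp.2 (hut u hu t)
  -- derivatives
  have hinner : ∀ t u : ℝ, HasDerivAt (fun u : ℝ => rexp (u*t)/z) (t * (rexp (u*t)/z)) u := by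
    intro t u
    have h1 : HasDerivAt (fun u : ℝ => u * t) t u := hasDerivAt_mul_const t
    have h2 := (h1.exp).div_const z
    exact h2.congr_deriv (by ring)
  have hderiv1 : ∀ t u : ℝ, HasDerivAt (fun u => F (rexp (u*t)/z))
      (F' (rexp (u*t)/z) * (t * (rexp (u*t)/z))) u :=
    fun t u => (hdF _ (hxpos u t)).comp u (hinner t u)
  have hderiv2 : ∀ t u : ℝ, HasDerivAt (fun u => F' (rexp (u*t)/z) * (t * (rexp (u*t)/z)))
      (q t u) u := by
    intro t u
    have ha : HasDerivAt (fun u => F' (rexp (u*t)/z))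
        (F'' (rexp (u*t)/z) * (t * (rexp (u*t)/z))) u :=
      (hdF' _ (hxpos u t)).comp u (hinner t u)
    have hb2 : HasDerivAt (fun u : ℝ => t * (rexp (u*t)/z)) (t * (t * (rexp (u*t)/z))) u :=
      (hinner t u).const_mul t
    have := ha.mul hb2
    exact this.congr_deriv (by simp only [hq_def]; ring)
  -- Taylor
  have hTay : ∀ y : ℝ, 0 < y → ∀ t : ℝ, ∃ u ∈ Ioo 0 (Real.sqrt y), R y t = q t u / 2 := by
    intro y hy t
    have hs : 0 < Real.sqrt y := Real.sqrt_pos.2 hy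
    obtain ⟨u, hu, heq⟩ := taylor2 hs (fun u _ => hderiv1 t u) (fun u _ => hderiv2 t u)
    refine ⟨u, hu, ?_⟩
    have heq' : F (rexp (Real.sqrt y * t)/z) = F (rexp (0*t)/z)
        + Real.sqrt y * (F' (rexp (0*t)/z) * (t * (rexp (0*t)/z)))
        + (Real.sqrt y)^2/2 * q t u := heq
    rw [zero_mul, Real.exp_zero] at heq'
    have hsq : Real.sqrt y ^ 2 = y := Real.sq_sqrt hy.le
    rw [hR_def]
    show (F (rexp (Real.sqrt y * t) / z) - F (1 / z) - Real.sqrt y * t * c) / y = q t u / 2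
    rw [heq', hsq, hc_def]
    field_simp
    ring
  -- q bound
  have hqbound : ∀ t : ℝ, ∀ u ∈ Icc (0:ℝ) 1, |q t u| ≤ K * rexp (b*|t|) := by
    intro t u hu
    have hx := hxpos u t
    have hxle : rexp (u*t)/z ≤ rexp |t|/z := by gcongr; exact hut u hu t
    have hF'le : |F' (rexp (u*t)/z)| ≤ M * rexp (γ*|t|) := by
      have h := hFbound u hu t
      have := abs_nonneg (F (rexp (u*t)/z))
      have := abs_nonneg (F'' (rexp (u*t)/z))
      linarith
    have hF''le : |F'' (rexp (u*t)/z)| ≤ M * rexp (γ*|t|) := by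
      have h := hFbound u hu t
      have := abs_nonneg (F (rexp (u*t)/z))
      have := abs_nonneg (F' (rexp (u*t)/z))
      linarith
    have ht2 := sq_le_four_mul_exp_abs t
    have he1 : (1:ℝ) ≤ rexp |t| := by
      rw [← Real.exp_zero]; exact Real.exp_le_exp.2 (abs_nonneg t)
    have hstep1 : |q t u| ≤ M * rexp (γ*|t|) * ((t * (rexp (u*t)/z))^2 + t^2 * (rexp (u*t)/z)) := by
      rw [hq_def]
      refine le_trans (abs_add_le _ _) ?_
      rw [abs_mul, abs_mul]
      rw [abs_of_nonneg (sq_nonneg (t * (rexp (u*t)/z))), abs_of_nonneg (by positivity : (0:ℝ) ≤ t^2 * (rexp (u*t)/z))]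
      have g1 : |F'' (rexp (u*t)/z)| * (t * (rexp (u*t)/z))^2
          ≤ M * rexp (γ*|t|) * (t * (rexp (u*t)/z))^2 := by gcongr
      have g2 : |F' (rexp (u*t)/z)| * (t^2 * (rexp (u*t)/z))
          ≤ M * rexp (γ*|t|) * (t^2 * (rexp (u*t)/z)) := by gcongr
      linarith [g1, g2]
    have hx2 : (rexp (u*t)/z)^2 ≤ (rexp |t|)^2/z^2 := by
      rw [← div_pow]
      exact pow_le_pow_left₀ hx.le hxle 2
    have hxE : rexp (u*t)/z ≤ (rexp |t|)^2/z := by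
      refine le_trans hxle ?_
      gcongr
      nlinarith [he1]
    have hmain : t^2 * ((rexp (u*t)/z)^2 + rexp (u*t)/z)
        ≤ (4 * rexp |t|) * ((rexp |t|)^2/z^2 + (rexp |t|)^2/z) :=
      mul_le_mul ht2 (add_le_add hx2 hxE) (by positivity) (by positivity)
    calc |q t u| ≤ M * rexp (γ*|t|) * ((t * (rexp (u*t)/z))^2 + t^2 * (rexp (u*t)/z)) := hstep1
      _ = M * rexp (γ*|t|) * (t^2 * ((rexp (u*t)/z)^2 + rexp (u*t)/z)) := by ring
      _ ≤ M * rexp (γ*|t|) * ((4 * rexp |t|) * ((rexp |t|)^2/z^2 + (rexp |t|)^2/z)) :=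
          mul_le_mul_of_nonneg_left hmain (mul_nonneg hM.le (Real.exp_pos _).le)
      _ = K * (rexp (γ*|t|) * (rexp |t| * (rexp |t|)^2)) := by rw [hK_def]; ring
      _ = K * rexp (b*|t|) := by
          rw [sq, ← Real.exp_add, ← Real.exp_add, ← Real.exp_add, hb_def]
          congr 1
          ring
  -- continuity facts
  have hFcont : ContinuousOn F (Ioi 0) :=
    fun x hx => (hdF x hx).continuousAt.continuousWithinAt
  have hF'cont : ContinuousOn F' (Ioi 0) :=
    fun x hx => (hdF' x hx).continuousAt.continuousWithinAt
  have hic : ∀ s : ℝ, Continuous (fun t : ℝ => rexp (s*t)/z) := by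
    intro s
    exact (Real.continuous_exp.comp (continuous_const.mul continuous_id)).div_const z
  have hic' : ∀ t : ℝ, Continuous (fun u : ℝ => rexp (u*t)/z) := by
    intro t
    exact (Real.continuous_exp.comp (continuous_id.mul continuous_const)).div_const z
  have hcontF : ∀ s : ℝ, Continuous (fun t => F (rexp (s*t)/z)) := by
    intro s
    exact hFcont.comp_continuous (hic s) (fun t => hxpos s t)
  have hcontq : ∀ t : ℝ, Continuous (fun u => q t u) := by
    intro t
    simp only [hq_def]
    refine Continuous.add (Continuous.mul ?_ ((continuous_const.mul (hic' t)).pow 2))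
      (Continuous.mul ?_ (continuous_const.mul (hic' t)))
    · exact hF''cont.comp_continuous (hic' t) (fun u => hxpos u t)
    · exact hF'cont.comp_continuous (hic' t) (fun u => hxpos u t)
  -- integrability of main integrand
  have hintF : ∀ s ∈ Icc (0:ℝ) 1, Integrable (fun t => F (rexp (s*t)/z)) (gaussianReal 0 1) := by
    intro s hs
    refine ((integrable_exp_abs_gauss γ).const_mul M).mono'
      (hcontF s).aestronglyMeasurable (ae_of_all _ fun t => ?_)
    rw [Real.norm_eq_abs]
    have h := hFbound s hs t
    have := abs_nonneg (F' (rexp (s*t)/z))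
    have := abs_nonneg (F'' (rexp (s*t)/z))
    linarith
  -- the constant integral
  have hconst : ∫ t, F (rexp (Real.sqrt 0 * t)/z) ∂(gaussianReal 0 1) = F (1/z) := by
    simp [Real.sqrt_zero]
  -- eventual equality
  have heqv : (fun y : ℝ =>
      ((∫ t, F (rexp (Real.sqrt y * t)/z) ∂(gaussianReal 0 1)) -
        ∫ t, F (rexp (Real.sqrt 0 * t)/z) ∂(gaussianReal 0 1))/y)
      =ᶠ[𝓝[>] (0:ℝ)] (fun y => ∫ t, R y t ∂(gaussianReal 0 1)) := by
    filter_upwards [Ioo_mem_nhdsGT_of_mem (by norm_num : (0:ℝ) ∈ Ico (0:ℝ) 1)] with y hy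
    have hy0 : 0 < y := hy.1
    have hs1 : Real.sqrt y ∈ Icc (0:ℝ) 1 :=
      ⟨Real.sqrt_nonneg y, Real.sqrt_le_one.mpr hy.2.le⟩
    have hlin : Integrable (fun t : ℝ => Real.sqrt y * t * c) (gaussianReal 0 1) :=
      (integrable_id_gauss.const_mul (Real.sqrt y * c)).congr
        (ae_of_all _ fun t => by ring)
    have hlin0 : ∫ t, Real.sqrt y * t * c ∂(gaussianReal 0 1) = 0 := by
      have hrw : ∀ t : ℝ, Real.sqrt y * t * c = (Real.sqrt y * c) * t := fun t => by ring
      simp only [hrw]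
      rw [integral_const_mul, moment_one_gauss, mul_zero]
    have h2 : ∫ t, (F (rexp (Real.sqrt y * t)/z) - F (1/z) - Real.sqrt y * t * c)
          ∂(gaussianReal 0 1)
        = (∫ t, (F (rexp (Real.sqrt y * t)/z) - F (1/z)) ∂(gaussianReal 0 1))
          - ∫ t, Real.sqrt y * t * c ∂(gaussianReal 0 1) :=
      integral_sub ((hintF _ hs1).sub (integrable_const (F (1/z)))) hlin
    have h3 : ∫ t, (F (rexp (Real.sqrt y * t)/z) - F (1/z)) ∂(gaussianReal 0 1)
        = (∫ t, F (rexp (Real.sqrt y * t)/z) ∂(gaussianReal 0 1)) - F (1/z) := by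
      have h4 := integral_sub (hintF _ hs1) (integrable_const (F (1/z)))
      rw [integral_const] at h4
      simpa using h4
    have hint2 : ∫ t, R y t ∂(gaussianReal 0 1)
        = ((∫ t, F (rexp (Real.sqrt y * t)/z) ∂(gaussianReal 0 1)) - F (1/z) - 0)/y := by
      rw [hR_def]
      show (∫ t, (F (rexp (Real.sqrt y * t)/z) - F (1/z) - Real.sqrt y * t * c)/y
        ∂(gaussianReal 0 1)) = _
      rw [integral_div, h2, h3, hlin0]
    rw [hint2, hconst, sub_zero]
  -- value of the limit integral
  have hval : ∫ t, A/2 * t^2 ∂(gaussianReal 0 1)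
      = 1/2 * (F'' (1/z)/z^2 + F' (1/z)/z) := by
    rw [integral_const_mul, moment_two_gauss, mul_one, hA_def]
    ring
  have hq0 : ∀ t : ℝ, q t 0 = A * t^2 := by
    intro t
    rw [hq_def, hA_def]
    simp only [zero_mul, Real.exp_zero]
    field_simp
  -- dominated convergence
  have hDCT : Tendsto (fun y => ∫ t, R y t ∂(gaussianReal 0 1)) (𝓝[>] (0:ℝ))
      (𝓝 (∫ t, A/2 * t^2 ∂(gaussianReal 0 1))) := by
    refine tendsto_integral_filter_of_dominated_convergence (fun t => K * rexp (b * |t|))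
      ?_ ?_ ?_ ?_
    · refine Eventually.of_forall fun y => Continuous.aestronglyMeasurable ?_
      rw [hR_def]
      exact (((hcontF (Real.sqrt y)).sub continuous_const).sub
        ((continuous_const.mul continuous_id).mul continuous_const)).div_const y
    · filter_upwards [Ioo_mem_nhdsGT_of_mem (by norm_num : (0:ℝ) ∈ Ico (0:ℝ) 1)] with y hy
      refine ae_of_all _ fun t => ?_
      obtain ⟨u, hu, hru⟩ := hTay y hy.1 t
      have hu1 : u ∈ Icc (0:ℝ) 1 :=
        ⟨hu.1.le, le_trans hu.2.le (Real.sqrt_le_one.mpr hy.2.le)⟩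
      rw [Real.norm_eq_abs, hru, abs_div, abs_two]
      have hb1 := hqbound t u hu1
      have hb2 : (0:ℝ) ≤ K * rexp (b*|t|) := mul_nonneg hK.le (Real.exp_pos _).le
      linarith [abs_nonneg (q t u)]
    · exact (integrable_exp_abs_gauss b).const_mul K
    · refine ae_of_all _ fun t => ?_
      rw [Metric.tendsto_nhdsWithin_nhds]
      intro ε hε
      have hqc := (hcontq t).continuousAt (x := 0)
      rw [Metric.continuousAt_iff] at hqc
      obtain ⟨δ', hδ', hq'⟩ := hqc ε hε
      refine ⟨min (δ'^2) 1, by positivity, fun {y} hy hdist => ?_⟩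
      have hy0 : (0:ℝ) < y := hy
      rw [Real.dist_eq, sub_zero, abs_of_pos hy0] at hdist
      have hyδ : y < δ'^2 := lt_of_lt_of_le hdist (min_le_left _ _)
      obtain ⟨u, hu, hru⟩ := hTay y hy0 t
      have hsd : Real.sqrt y < δ' := by
        have h1 : Real.sqrt y < Real.sqrt (δ'^2) := Real.sqrt_lt_sqrt hy0.le hyδ
        rwa [Real.sqrt_sq hδ'.le] at h1
      have hud : dist u 0 < δ' := by
        rw [Real.dist_eq, sub_zero, abs_of_pos hu.1]
        linarith [hu.2]
      have hq2 := hq' hud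
      rw [Real.dist_eq] at hq2
      rw [hru, Real.dist_eq]
      have hrw : q t u / 2 - A/2 * t^2 = (q t u - q t 0)/2 := by rw [hq0 t]; ring
      rw [hrw, abs_div, abs_two]
      linarith [abs_nonneg (q t u - q t 0)]
  rw [← hval]
  exact hDCT.congr' heqv.symm
end

section
/- Assume Assumption (F), let H : [0,∞) → (0,∞) satisfy ∫_ℝ F(e^{√y t}/H(y)) dN(t) = 0 for all y ≥ 0 (N the standard Gaussian (normal N(0,1)) probability measure on ℝ), and let G(y) = H(y)·∫_ℝ e^{√y t} F'(e^{√y t}/H(y)) dN(t) / (−∫_ℝ e^{2√y t} F''(e^{√y t}/H(y)) dN(t)). If there exists c > 0 such that −x F''(x)/F'(x) ≥ c for all x > 0, then G(y) ≤ 1/c for all y ≥ 0. -/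
/-! Evaluated at `x = e^{√y t} / H(y)`, the bound `-x F''(x) / F'(x) ≥ c` reads
`c · H(y) e^{√y t} F'(x) ≤ -e^{2√y t} F''(x)`. Integrating this against the Gaussian
measure bounds `c` times the numerator of `G(y)` by its denominator. -/

open MeasureTheory ProbabilityTheory Set

theorem integral_div_integral_le_one_div {α : Type*} [MeasurableSpace α] {μ : Measure α}
    {a b : α → ℝ} {c : ℝ} (hc : 0 < c) (ha : ∀ t, 0 ≤ a t) (hab : ∀ t, c * a t ≤ b t) :
    (∫ t, a t ∂μ) / (∫ t, b t ∂μ) ≤ 1 / c := by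
  have ha_int : 0 ≤ ∫ t, a t ∂μ := integral_nonneg ha
  by_cases hb : Integrable b μ
  · have hb_nonneg : 0 ≤ ∫ t, b t ∂μ :=
      integral_nonneg fun t => (mul_nonneg hc.le (ha t)).trans (hab t)
    rcases hb_nonneg.eq_or_lt with hb0 | hb_pos
    · rw [← hb0, div_zero]
      positivity
    · rw [div_le_div_iff₀ hb_pos hc, one_mul, mul_comm]
      by_cases ha' : Integrable a μ
      · calc c * ∫ t, a t ∂μ = ∫ t, c * a t ∂μ := (integral_const_mul c a).symm
          _ ≤ ∫ t, b t ∂μ := integral_mono (ha'.const_mul c) hb hab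
      · rw [integral_undef ha', mul_zero]
        exact hb_pos.le
  · rw [integral_undef hb, div_zero]
    positivity

theorem const_mul_mul_le_neg_sq_mul_of_rra {F' F'' : ℝ → ℝ} {c h e : ℝ} (hh : 0 < h)
    (he : 0 < e) (hF' : 0 < F' (e / h)) (hRRA : c ≤ -(e / h * F'' (e / h)) / F' (e / h)) :
    c * (h * (e * F' (e / h))) ≤ -(e ^ 2 * F'' (e / h)) := by
  have hhx : h * (e / h) = e := mul_div_cancel₀ e hh.ne'
  calc c * (h * (e * F' (e / h))) = h * e * (c * F' (e / h)) := by ring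
    _ ≤ h * e * -(e / h * F'' (e / h)) :=
      mul_le_mul_of_nonneg_left ((le_div_iff₀ hF').mp hRRA) (by positivity)
    _ = -(h * (e / h) * e * F'' (e / h)) := by ring
    _ = -(e ^ 2 * F'' (e / h)) := by rw [hhx, sq]

theorem stmt_6_general (F' F'' : ℝ → ℝ)
    (hF'pos : ∀ x > (0:ℝ), 0 < F' x)
    (H : ℝ → ℝ)
    (hHpos : ∀ y ∈ Ici (0:ℝ), 0 < H y)
    (c : ℝ) (hc : 0 < c)
    (hRRA : ∀ x > (0:ℝ), c ≤ -(x * F'' x) / F' x) :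
    ∀ y ∈ Ici (0:ℝ),
      H y * (∫ t, Real.exp (Real.sqrt y * t) *
          F' (Real.exp (Real.sqrt y * t) / H y) ∂(gaussianReal 0 1)) /
        (-(∫ t, Real.exp (2 * Real.sqrt y * t) *
          F'' (Real.exp (Real.sqrt y * t) / H y) ∂(gaussianReal 0 1))) ≤ 1 / c := by
  intro y hy
  have hH := hHpos y hy
  have hx : ∀ t, 0 < Real.exp (Real.sqrt y * t) / H y := fun t => div_pos (Real.exp_pos _) hH
  have hexp : ∀ t, Real.exp (2 * Real.sqrt y * t) = Real.exp (Real.sqrt y * t) ^ 2 := by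
    intro t
    rw [← Real.exp_nat_mul]
    ring_nf
  rw [← integral_const_mul, ← integral_neg]
  refine integral_div_integral_le_one_div hc
    (fun t => mul_nonneg hH.le (mul_nonneg (Real.exp_pos _).le (hF'pos _ (hx t)).le))
    fun t => ?_
  rw [hexp]
  exact const_mul_mul_le_neg_sq_mul_of_rra hH (Real.exp_pos _) (hF'pos _ (hx t))
    (hRRA _ (hx t))

/-- Remark 4.1 of the paper: if the index of relative risk aversion of `F` is bounded
below by `c > 0`, then `G ≤ 1/c`. -/
theorem stmt_6 (F F' F'' : ℝ → ℝ)
    (hdF : ∀ x > (0:ℝ), HasDerivAt F (F' x) x)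
    (hdF' : ∀ x > (0:ℝ), HasDerivAt F' (F'' x) x)
    (hF''cont : ContinuousOn F'' (Ioi 0))
    (hF1 : F 1 = 0)
    (hF'pos : ∀ x > (0:ℝ), 0 < F' x)
    (hF''neg : ∀ x > (0:ℝ), F'' x < 0)
    (hgrowth : ∃ L : ℝ, 0 < L ∧ ∃ γ : ℝ, 0 < γ ∧ ∀ x > (0:ℝ),
      |F x| + |F' x| + |F'' x| ≤ L * (1 + x ^ γ + x ^ (-γ)))
    (H : ℝ → ℝ)
    (hHpos : ∀ y ∈ Ici (0:ℝ), 0 < H y)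
    (hHroot : ∀ y ∈ Ici (0:ℝ),
      (∫ t, F (Real.exp (Real.sqrt y * t) / H y) ∂(gaussianReal 0 1)) = 0)
    (c : ℝ) (hc : 0 < c)
    (hRRA : ∀ x > (0:ℝ), c ≤ -(x * F'' x) / F' x) :
    ∀ y ∈ Ici (0:ℝ),
      H y * (∫ t, Real.exp (Real.sqrt y * t) *
          F' (Real.exp (Real.sqrt y * t) / H y) ∂(gaussianReal 0 1)) /
        (-(∫ t, Real.exp (2 * Real.sqrt y * t) *
          F'' (Real.exp (Real.sqrt y * t) / H y) ∂(gaussianReal 0 1))) ≤ 1 / c :=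
  stmt_6_general F' F'' hF'pos H hHpos c hc hRRA
end

section
/- Let −1 < γ ≤ 0 and γ ≤ ρ < γ + 1 with (ρ, γ) ≠ (0, 0), define F(x) = x^{1−ρ+γ} − x^γ for x > 0 and H(y) = e^{(1−ρ+2γ)y/2} for y ≥ 0. Then for every y ≥ 0, H(y)·∫_ℝ e^{√y t} F'(e^{√y t}/H(y)) dN(t) / (−∫_ℝ e^{2√y t} F''(e^{√y t}/H(y)) dN(t)) = 1/(ρ − 2γ), where N is the standard Gaussian (normal N(0,1)) probability measure on ℝ; in particular ρ − 2γ > 0. -/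
open MeasureTheory ProbabilityTheory Set

lemma exp_rpow_aux (u p : ℝ) : (Real.exp u) ^ p = Real.exp (p * u) := by
  rw [Real.rpow_def_of_pos (Real.exp_pos u), Real.log_exp, mul_comm]

lemma gauss_pdf_mul_aux (c x : ℝ) :
    gaussianPDFReal 0 1 x * Real.exp (c * x)
      = Real.exp (c ^ 2 / 2) * gaussianPDFReal c 1 x := by
  simp only [gaussianPDFReal, NNReal.coe_one, mul_one, sub_zero]
  rw [mul_assoc, ← Real.exp_add, mul_comm (Real.exp (c ^ 2 / 2)), mul_assoc, ← Real.exp_add]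
  congr 1
  ring_nf

lemma gaussianReal_eq_aux :
    gaussianReal 0 1
      = MeasureTheory.volume.withDensity
          fun x => ((gaussianPDFReal 0 1 x).toNNReal : ENNReal) := by
  rw [gaussianReal_of_var_ne_zero 0 one_ne_zero]
  rfl

lemma integrable_exp_gauss_aux (c : ℝ) :
    Integrable (fun t => Real.exp (c * t)) (gaussianReal 0 1) := by
  rw [gaussianReal_eq_aux,
    integrable_withDensity_iff_integrable_smul (measurable_gaussianPDFReal 0 1).real_toNNReal]
  have : (fun x => (gaussianPDFReal 0 1 x).toNNReal • Real.exp (c * x))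
      = fun x => Real.exp (c ^ 2 / 2) * gaussianPDFReal c 1 x := by
    funext x
    rw [NNReal.smul_def, Real.coe_toNNReal _ (gaussianPDFReal_nonneg 0 1 x), smul_eq_mul, gauss_pdf_mul_aux]
  rw [this]
  exact (integrable_gaussianPDFReal c 1).const_mul _

lemma integral_exp_gauss_aux (c : ℝ) :
    ∫ t, Real.exp (c * t) ∂(gaussianReal 0 1) = Real.exp (c ^ 2 / 2) := by
  rw [gaussianReal_eq_aux,
    integral_withDensity_eq_integral_smul (measurable_gaussianPDFReal 0 1).real_toNNReal]
  have : (fun x => (gaussianPDFReal 0 1 x).toNNReal • Real.exp (c * x))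
      = fun x => Real.exp (c ^ 2 / 2) * gaussianPDFReal c 1 x := by
    funext x
    rw [NNReal.smul_def, Real.coe_toNNReal _ (gaussianPDFReal_nonneg 0 1 x), smul_eq_mul, gauss_pdf_mul_aux]
  rw [this, integral_const_mul, integral_gaussianPDFReal_eq_one c one_ne_zero, mul_one]

lemma deriv1_aux (a b : ℝ) {z : ℝ} (hz : 0 < z) :
    deriv (fun x : ℝ => x ^ a - x ^ b) z = a * z ^ (a - 1) - b * z ^ (b - 1) :=
  ((Real.hasDerivAt_rpow_const (Or.inl hz.ne')).sub
    (Real.hasDerivAt_rpow_const (Or.inl hz.ne'))).deriv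

lemma deriv2_aux (a b : ℝ) {z : ℝ} (hz : 0 < z) :
    deriv (deriv (fun x : ℝ => x ^ a - x ^ b)) z
      = a * (a - 1) * z ^ (a - 2) - b * (b - 1) * z ^ (b - 2) := by
  have h1 : deriv (fun x : ℝ => x ^ a - x ^ b)
      =ᶠ[nhds z] fun x => a * x ^ (a - 1) - b * x ^ (b - 1) := by
    filter_upwards [Ioi_mem_nhds hz] with x hx
    exact deriv1_aux a b hx
  rw [h1.deriv_eq]
  have h2 := (((Real.hasDerivAt_rpow_const (p := a - 1) (Or.inl hz.ne')).const_mul a).sub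
    ((Real.hasDerivAt_rpow_const (p := b - 1) (Or.inl hz.ne')).const_mul b)).deriv
  change deriv ((fun y => a * y ^ (a - 1)) - fun y => b * y ^ (b - 1)) z = _
  rw [h2, show a - 1 - 1 = a - 2 by ring, show b - 1 - 1 = b - 2 by ring]
  ring

lemma exp_comb_aux (c p q u v : ℝ) (h : p + q = u + v) :
    Real.exp p * (c * Real.exp q) = c * Real.exp u * Real.exp v := by
  rw [mul_left_comm, ← Real.exp_add, mul_assoc, ← Real.exp_add, h]

lemma exp_comb2_aux (c p q r : ℝ) (h : p + q = r) :
    c * Real.exp p * Real.exp q = c * Real.exp r := by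
  rw [mul_assoc, ← Real.exp_add, h]

/-- Example 4.1 of the paper (weighted utility): the function `G` is constant equal
to `1/(ρ - 2γ)`, where `F(x) = x^{1-ρ+γ} - x^γ` and `H(y) = e^{(1-ρ+2γ)y/2}`. -/
theorem stmt_8 (γ ρ : ℝ) (hγ₁ : -1 < γ) (hγ₂ : γ ≤ 0) (hρ₁ : γ ≤ ρ) (hρ₂ : ρ < γ + 1)
    (hne : (ρ, γ) ≠ (0, 0)) :
    0 < ρ - 2 * γ ∧
    ∀ y ∈ Ici (0:ℝ),
      Real.exp ((1 - ρ + 2 * γ) * y / 2) *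
        (∫ t, Real.exp (Real.sqrt y * t) *
          deriv (fun x : ℝ => x ^ (1 - ρ + γ) - x ^ γ)
            (Real.exp (Real.sqrt y * t) / Real.exp ((1 - ρ + 2 * γ) * y / 2))
          ∂(gaussianReal 0 1)) /
      (-(∫ t, Real.exp (2 * Real.sqrt y * t) *
          deriv (deriv (fun x : ℝ => x ^ (1 - ρ + γ) - x ^ γ))
            (Real.exp (Real.sqrt y * t) / Real.exp ((1 - ρ + 2 * γ) * y / 2))
          ∂(gaussianReal 0 1))) = 1 / (ρ - 2 * γ) := by
  have hpos : 0 < ρ - 2 * γ := by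
    rcases lt_or_eq_of_le hγ₂ with h | h
    · linarith
    · subst h
      rcases lt_or_eq_of_le hρ₁ with h' | h'
      · linarith
      · exact absurd (by rw [← h']) hne
  refine ⟨hpos, fun y hy => ?_⟩
  set a : ℝ := 1 - ρ + γ with ha
  set s : ℝ := Real.sqrt y with hs
  set m : ℝ := (1 - ρ + 2 * γ) * y / 2 with hm
  set E : ℝ := (a + γ - a * γ) * y / 2 with hE
  have hs2 : s ^ 2 = y := Real.sq_sqrt hy
  have hz : ∀ t : ℝ, Real.exp (s * t) / Real.exp m = Real.exp (s * t - m) :=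
    fun t => (Real.exp_sub _ _).symm
  have hzpos : ∀ t : ℝ, (0:ℝ) < Real.exp (s * t - m) := fun t => Real.exp_pos _
  -- numerator
  have hnum : (∫ t, Real.exp (s * t) *
        deriv (fun x : ℝ => x ^ a - x ^ γ) (Real.exp (s * t) / Real.exp m)
        ∂(gaussianReal 0 1))
      = (a - γ) * Real.exp E := by
    have heq : (fun t => Real.exp (s * t) *
          deriv (fun x : ℝ => x ^ a - x ^ γ) (Real.exp (s * t) / Real.exp m))
        = fun t => (a * Real.exp (-(a - 1) * m)) * Real.exp ((a * s) * t)
            - (γ * Real.exp (-(γ - 1) * m)) * Real.exp ((γ * s) * t) := by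
      funext t
      rw [hz t, deriv1_aux a γ (hzpos t), exp_rpow_aux, exp_rpow_aux, mul_sub]
      rw [exp_comb_aux a _ _ (-(a - 1) * m) ((a * s) * t) (by ring),
        exp_comb_aux γ _ _ (-(γ - 1) * m) ((γ * s) * t) (by ring)]
    rw [heq, integral_sub ((integrable_exp_gauss_aux (a * s)).const_mul _)
      ((integrable_exp_gauss_aux (γ * s)).const_mul _),
      integral_const_mul, integral_const_mul, integral_exp_gauss_aux, integral_exp_gauss_aux,
      exp_comb2_aux a _ _ E (by rw [mul_pow, hs2, hm, hE, ha]; ring),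
      exp_comb2_aux γ _ _ E (by rw [mul_pow, hs2, hm, hE, ha]; ring)]
    ring
  -- denominator
  have hden : (∫ t, Real.exp (2 * s * t) *
        deriv (deriv (fun x : ℝ => x ^ a - x ^ γ)) (Real.exp (s * t) / Real.exp m)
        ∂(gaussianReal 0 1))
      = (a - γ) * (a + γ - 1) * (Real.exp E * Real.exp m) := by
    have heq : (fun t => Real.exp (2 * s * t) *
          deriv (deriv (fun x : ℝ => x ^ a - x ^ γ)) (Real.exp (s * t) / Real.exp m))
        = fun t => (a * (a - 1) * Real.exp (-(a - 2) * m)) * Real.exp ((a * s) * t)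
            - (γ * (γ - 1) * Real.exp (-(γ - 2) * m)) * Real.exp ((γ * s) * t) := by
      funext t
      rw [hz t, deriv2_aux a γ (hzpos t), exp_rpow_aux, exp_rpow_aux, mul_sub]
      rw [exp_comb_aux (a * (a - 1)) _ _ (-(a - 2) * m) ((a * s) * t) (by ring),
        exp_comb_aux (γ * (γ - 1)) _ _ (-(γ - 2) * m) ((γ * s) * t) (by ring)]
    rw [heq, integral_sub ((integrable_exp_gauss_aux (a * s)).const_mul _)
      ((integrable_exp_gauss_aux (γ * s)).const_mul _),
      integral_const_mul, integral_const_mul, integral_exp_gauss_aux, integral_exp_gauss_aux,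
      exp_comb2_aux (a * (a - 1)) _ _ (E + m) (by rw [mul_pow, hs2, hm, hE, ha]; ring),
      exp_comb2_aux (γ * (γ - 1)) _ _ (E + m) (by rw [mul_pow, hs2, hm, hE, ha]; ring),
      Real.exp_add]
    ring
  rw [hnum, hden]
  have h1 : a - γ = 1 - ρ := by rw [ha]; ring
  have h2 : a + γ - 1 = -(ρ - 2 * γ) := by rw [ha]; ring
  rw [h1, h2]
  have hX : Real.exp m * ((1 - ρ) * Real.exp E) ≠ 0 := by
    have : (0:ℝ) < 1 - ρ := by linarith
    positivity
  have hrw : -((1 - ρ) * -(ρ - 2 * γ) * (Real.exp E * Real.exp m))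
      = Real.exp m * ((1 - ρ) * Real.exp E) * (ρ - 2 * γ) := by ring
  rw [hrw, div_mul_eq_div_mul_one_div, div_self hX, one_mul]
end

section
/- Assume Assumption (F), let a ≥ 0 and b ∈ ℝ, and define f(x,z) = ∫_ℝ F((x/z)e^{b+√a t}) dN(t) for x > 0, z > 0, where N is the standard Gaussian (normal N(0,1)) probability measure on ℝ. Then for all x > 0 and z > 0, writing w_t = (x/z)e^{b+√a t}: f is twice differentiable in x and differentiable in z, with ∂f/∂x(x,z) = (1/x)∫_ℝ F'(w_t)·w_t dN(t), ∂²f/∂x²(x,z) = (1/x²)∫_ℝ F''(w_t)·w_t² dN(t), and ∂f/∂z(x,z) = −(1/z)∫_ℝ F'(w_t)·w_t dN(t) < 0. -/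
open MeasureTheory ProbabilityTheory Set

lemma gauss_exp_integrable (k : ℝ) :
    Integrable (fun t => Real.exp (k * t)) (gaussianReal 0 1) := by
  rw [gaussianReal_of_var_ne_zero 0 one_ne_zero,
    integrable_withDensity_iff (measurable_gaussianPDF 0 1)
      (ae_of_all _ fun t => ENNReal.ofReal_lt_top)]
  have heq : (fun t => Real.exp (k * t) * (gaussianPDF 0 1 t).toReal)
      = fun t => ((Real.sqrt (2 * Real.pi))⁻¹ * Real.exp (k ^ 2 / 2)) *
          Real.exp (-(1/2 : ℝ) * (t - k) ^ 2) := by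
    funext t
    rw [gaussianPDF, ENNReal.toReal_ofReal (gaussianPDFReal_nonneg _ _ _), gaussianPDFReal]
    push_cast
    rw [mul_one, mul_comm (Real.exp (k*t)), mul_assoc, mul_assoc, ← Real.exp_add, ← Real.exp_add]
    congr 2
    ring
  rw [heq]
  exact ((integrable_exp_neg_mul_sq (by norm_num : (0:ℝ) < 1/2)).comp_sub_right k).const_mul _

lemma gauss_exp_integrable' (p q : ℝ) :
    Integrable (fun t => Real.exp (p + q * t)) (gaussianReal 0 1) := by
  simp_rw [Real.exp_add]
  exact (gauss_exp_integrable q).const_mul _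

lemma exp_rpow_aux_s15 (u s b c : ℝ) (hu : 0 < u) (t : ℝ) :
    (u * Real.exp (b + c * t)) ^ s = u ^ s * Real.exp (s * b + s * c * t) := by
  rw [Real.mul_rpow hu.le (Real.exp_pos _).le,
    Real.rpow_def_of_pos (Real.exp_pos _), Real.log_exp]
  ring_nf

lemma integ_growth (G : ℝ → ℝ) (hG : ContinuousOn G (Ioi 0)) (C δ : ℝ)
    (hbd : ∀ w > (0:ℝ), |G w| ≤ C * (w ^ δ + w ^ (-δ))) (b c u : ℝ) (hu : 0 < u) :
    Integrable (fun t => G (u * Real.exp (b + c * t))) (gaussianReal 0 1) := by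
  have hwpos : ∀ t : ℝ, 0 < u * Real.exp (b + c * t) :=
    fun t => mul_pos hu (Real.exp_pos _)
  have hmeas : AEStronglyMeasurable (fun t => G (u * Real.exp (b + c * t)))
      (gaussianReal 0 1) := by
    refine (hG.comp_continuous (by continuity) fun t => ?_).aestronglyMeasurable
    exact hwpos t
  refine Integrable.mono
    (((gauss_exp_integrable' (δ*b) (δ*c)).const_mul (C * u ^ δ)).add
      ((gauss_exp_integrable' (-δ*b) (-δ*c)).const_mul (C * u ^ (-δ)))) hmeas
    (ae_of_all _ fun t => ?_)
  have h1 := hbd _ (hwpos t)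
  rw [exp_rpow_aux_s15 u δ b c hu t, exp_rpow_aux_s15 u (-δ) b c hu t] at h1
  simp only [Pi.add_apply, Real.norm_eq_abs]
  exact h1.trans (le_trans (le_of_eq (by ring)) (le_abs_self _))

lemma rpow_term_bound {w s d : ℝ} (hw : 0 < w) (h1 : -d ≤ s) (h2 : s ≤ d) :
    w ^ s ≤ w ^ d + w ^ (-d) := by
  rcases le_or_gt 1 w with h | h
  · exact le_add_of_le_of_nonneg (Real.rpow_le_rpow_of_exponent_le h h2)
      (Real.rpow_nonneg hw.le _)
  · exact le_add_of_nonneg_of_le (Real.rpow_nonneg hw.le _)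
      (Real.rpow_le_rpow_of_exponent_ge hw h.le h1)

lemma core_deriv (G G' : ℝ → ℝ) (hdG : ∀ w > (0:ℝ), HasDerivAt G (G' w) w)
    (hcontG' : ContinuousOn G' (Ioi 0))
    (C δ : ℝ) (hC : 0 < C) (hδ : 0 < δ)
    (hbG : ∀ w > (0:ℝ), |G w| ≤ C * (w ^ δ + w ^ (-δ)))
    (hbG' : ∀ w > (0:ℝ), |G' w| ≤ C * (w ^ δ + w ^ (-δ)))
    (b c u : ℝ) (hu : 0 < u) :
    HasDerivAt (fun u' => ∫ t, G (u' * Real.exp (b + c * t)) ∂(gaussianReal 0 1))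
      (∫ t, G' (u * Real.exp (b + c * t)) * Real.exp (b + c * t) ∂(gaussianReal 0 1)) u := by
  have hcontG : ContinuousOn G (Ioi 0) :=
    fun w hw => ((hdG w hw).continuousAt).continuousWithinAt
  set K : ℝ := (u + u/2) ^ δ + (u/2) ^ (-δ) with hK
  have hball : ∀ u' ∈ Metric.ball u (u/2), u/2 < u' ∧ u' < u + u/2 := by
    intro u' hu'
    rw [Metric.mem_ball, Real.dist_eq, abs_lt] at hu'
    constructor <;> linarith [hu'.1, hu'.2]
  have hmain := hasDerivAt_integral_of_dominated_loc_of_deriv_le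
    (μ := gaussianReal 0 1)
    (x₀ := u)
    (F := fun u' t => G (u' * Real.exp (b + c * t)))
    (F' := fun u' t => G' (u' * Real.exp (b + c * t)) * Real.exp (b + c * t))
    (bound := fun t => C * K * (Real.exp ((δ+1)*b + (δ+1)*c*t)
      + Real.exp ((1-δ)*b + (1-δ)*c*t)))
    (Metric.ball_mem_nhds u (half_pos hu))
    ?_ ?_ ?_ ?_ ?_ ?_
  · exact hmain.2
  · -- eventual measurability
    filter_upwards [eventually_gt_nhds (half_lt_self hu)] with u' hu'
    have h2 : (0:ℝ) < u' := lt_trans (half_pos hu) hu'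
    exact ((hcontG.comp_continuous (by continuity)
      (fun t => mul_pos h2 (Real.exp_pos _))).aestronglyMeasurable)
  · exact integ_growth G hcontG C δ hbG b c u hu
  · exact (((hcontG'.comp_continuous (by continuity)
      (fun t => mul_pos hu (Real.exp_pos _))).mul (by continuity)).aestronglyMeasurable)
  · -- bound
    refine ae_of_all _ fun t u' hu' => ?_
    obtain ⟨hlo, hhi⟩ := hball u' hu'
    have hu'pos : 0 < u' := lt_trans (half_pos hu) hlo
    have hwpos : 0 < u' * Real.exp (b + c * t) := mul_pos hu'pos (Real.exp_pos _)
    have h1 := hbG' _ hwpos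
    rw [exp_rpow_aux_s15 u' δ b c hu'pos t, exp_rpow_aux_s15 u' (-δ) b c hu'pos t] at h1
    rw [Real.norm_eq_abs, abs_mul, abs_of_pos (Real.exp_pos _)]
    have hKb1 : u' ^ δ ≤ K :=
      le_add_of_le_of_nonneg (Real.rpow_le_rpow hu'pos.le hhi.le hδ.le)
        (Real.rpow_nonneg (by positivity) _)
    have hKb2 : u' ^ (-δ) ≤ K := by
      refine le_add_of_nonneg_of_le (Real.rpow_nonneg (by positivity) _) ?_
      rw [Real.rpow_neg hu'pos.le, Real.rpow_neg (by positivity : (0:ℝ) ≤ u/2)]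
      exact inv_anti₀ (Real.rpow_pos_of_pos (half_pos hu) _)
        (Real.rpow_le_rpow (half_pos hu).le hlo.le hδ.le)
    calc |G' (u' * Real.exp (b + c*t))| * Real.exp (b + c*t)
        ≤ (C * (u' ^ δ * Real.exp (δ*b + δ*c*t) + u' ^ (-δ) * Real.exp (-δ*b + -δ*c*t)))
            * Real.exp (b + c*t) := by
          exact mul_le_mul_of_nonneg_right h1 (Real.exp_pos _).le
      _ ≤ C * K * (Real.exp ((δ+1)*b + (δ+1)*c*t) + Real.exp ((1-δ)*b + (1-δ)*c*t)) := by
          have e1 : Real.exp (δ*b + δ*c*t) * Real.exp (b + c*t)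
              = Real.exp ((δ+1)*b + (δ+1)*c*t) := by
            rw [← Real.exp_add]; ring_nf
          have e2 : Real.exp (-δ*b + -δ*c*t) * Real.exp (b + c*t)
              = Real.exp ((1-δ)*b + (1-δ)*c*t) := by
            rw [← Real.exp_add]; ring_nf
          calc (C * (u' ^ δ * Real.exp (δ*b + δ*c*t) + u' ^ (-δ) * Real.exp (-δ*b + -δ*c*t)))
              * Real.exp (b + c*t)
              = C * (u' ^ δ * (Real.exp (δ*b + δ*c*t) * Real.exp (b + c*t))
                + u' ^ (-δ) * (Real.exp (-δ*b + -δ*c*t) * Real.exp (b + c*t))) := by ring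
            _ = C * (u' ^ δ * Real.exp ((δ+1)*b + (δ+1)*c*t)
                + u' ^ (-δ) * Real.exp ((1-δ)*b + (1-δ)*c*t)) := by rw [e1, e2]
            _ ≤ C * (K * Real.exp ((δ+1)*b + (δ+1)*c*t)
                + K * Real.exp ((1-δ)*b + (1-δ)*c*t)) := by
                refine mul_le_mul_of_nonneg_left (add_le_add ?_ ?_) hC.le <;>
                  exact mul_le_mul_of_nonneg_right (by assumption) (Real.exp_pos _).le
            _ = C * K * (Real.exp ((δ+1)*b + (δ+1)*c*t) + Real.exp ((1-δ)*b + (1-δ)*c*t)) := by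
                ring
  · exact (((gauss_exp_integrable' ((δ+1)*b) ((δ+1)*c)).add
      (gauss_exp_integrable' ((1-δ)*b) ((1-δ)*c))).const_mul (C * K))
  · refine ae_of_all _ fun t u' hu' => ?_
    have hu'pos : 0 < u' := lt_trans (half_pos hu) (hball u' hu').1
    have := (hdG _ (mul_pos hu'pos (Real.exp_pos _))).comp u'
      (hasDerivAt_mul_const (Real.exp (b + c * t)) (x := u'))
    exact this

/-- Lemma A.2 of the paper: differentiation under the integral for
`f(x,z) = ∫ F((x/z)e^{b+√a t}) dN(t)`, and the sign of `f_z`. -/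
theorem stmt_15 (F F' F'' : ℝ → ℝ)
    (hdF : ∀ x > (0:ℝ), HasDerivAt F (F' x) x)
    (hdF' : ∀ x > (0:ℝ), HasDerivAt F' (F'' x) x)
    (hF''cont : ContinuousOn F'' (Ioi 0))
    (hF1 : F 1 = 0)
    (hF'pos : ∀ x > (0:ℝ), 0 < F' x)
    (hF''neg : ∀ x > (0:ℝ), F'' x < 0)
    (hgrowth : ∃ L : ℝ, 0 < L ∧ ∃ γ : ℝ, 0 < γ ∧ ∀ x > (0:ℝ),
      |F x| + |F' x| + |F'' x| ≤ L * (1 + x ^ γ + x ^ (-γ)))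
    (a b : ℝ) (ha : 0 ≤ a) (x z : ℝ) (hx : 0 < x) (hz : 0 < z) :
    HasDerivAt (fun x' : ℝ =>
        ∫ t, F ((x' / z) * Real.exp (b + Real.sqrt a * t)) ∂(gaussianReal 0 1))
      ((1 / x) * ∫ t, F' ((x / z) * Real.exp (b + Real.sqrt a * t)) *
        ((x / z) * Real.exp (b + Real.sqrt a * t)) ∂(gaussianReal 0 1)) x ∧
    HasDerivAt (fun x' : ℝ =>
        (1 / x') * ∫ t, F' ((x' / z) * Real.exp (b + Real.sqrt a * t)) *
          ((x' / z) * Real.exp (b + Real.sqrt a * t)) ∂(gaussianReal 0 1))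
      ((1 / x ^ 2) * ∫ t, F'' ((x / z) * Real.exp (b + Real.sqrt a * t)) *
        ((x / z) * Real.exp (b + Real.sqrt a * t)) ^ 2 ∂(gaussianReal 0 1)) x ∧
    HasDerivAt (fun z' : ℝ =>
        ∫ t, F ((x / z') * Real.exp (b + Real.sqrt a * t)) ∂(gaussianReal 0 1))
      (-(1 / z) * ∫ t, F' ((x / z) * Real.exp (b + Real.sqrt a * t)) *
        ((x / z) * Real.exp (b + Real.sqrt a * t)) ∂(gaussianReal 0 1)) z ∧
    -(1 / z) * (∫ t, F' ((x / z) * Real.exp (b + Real.sqrt a * t)) *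
        ((x / z) * Real.exp (b + Real.sqrt a * t)) ∂(gaussianReal 0 1)) < 0 := by
  obtain ⟨L, hL, γ, hγ, hg⟩ := hgrowth
  set c : ℝ := Real.sqrt a with hc
  have hxz : (0:ℝ) < x / z := div_pos hx hz
  have hcontF' : ContinuousOn F' (Ioi 0) :=
    fun w hw => ((hdF' w hw).continuousAt).continuousWithinAt
  have hcontF : ContinuousOn F (Ioi 0) :=
    fun w hw => ((hdF w hw).continuousAt).continuousWithinAt
  -- individual growth bounds
  have hgF : ∀ w > (0:ℝ), |F w| ≤ L * (1 + w ^ γ + w ^ (-γ)) := fun w hw => by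
    have := hg w hw; have := abs_nonneg (F' w); have := abs_nonneg (F'' w); linarith
  have hgF' : ∀ w > (0:ℝ), |F' w| ≤ L * (1 + w ^ γ + w ^ (-γ)) := fun w hw => by
    have := hg w hw; have := abs_nonneg (F w); have := abs_nonneg (F'' w); linarith
  have hgF'' : ∀ w > (0:ℝ), |F'' w| ≤ L * (1 + w ^ γ + w ^ (-γ)) := fun w hw => by
    have := hg w hw; have := abs_nonneg (F w); have := abs_nonneg (F' w); linarith
  have hone : ∀ w > (0:ℝ), ∀ d : ℝ, 0 < d → (1:ℝ) ≤ w ^ d + w ^ (-d) := by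
    intro w hw d hd
    have := rpow_term_bound (s := 0) (d := d) hw (by linarith) hd.le
    rwa [Real.rpow_zero] at this
  have hbF : ∀ w > (0:ℝ), |F w| ≤ (2*L) * (w ^ γ + w ^ (-γ)) := fun w hw => by
    have h1 := hgF w hw; have h2 := hone w hw γ hγ; nlinarith
  have hbF' : ∀ w > (0:ℝ), |F' w| ≤ (2*L) * (w ^ γ + w ^ (-γ)) := fun w hw => by
    have h1 := hgF' w hw; have h2 := hone w hw γ hγ; nlinarith
  -- bounds with exponent γ+1 for H = F'·id and its derivative
  have hSfacts : ∀ w > (0:ℝ),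
      w ≤ w ^ (γ+1) + w ^ (-(γ+1)) ∧ w ^ γ * w ≤ w ^ (γ+1) + w ^ (-(γ+1)) ∧
      w ^ (-γ) * w ≤ w ^ (γ+1) + w ^ (-(γ+1)) ∧ w ^ γ ≤ w ^ (γ+1) + w ^ (-(γ+1)) ∧
      w ^ (-γ) ≤ w ^ (γ+1) + w ^ (-(γ+1)) ∧ (1:ℝ) ≤ w ^ (γ+1) + w ^ (-(γ+1)) := by
    intro w hw
    refine ⟨?_, ?_, ?_, ?_, ?_, hone w hw (γ+1) (by linarith)⟩
    · have := rpow_term_bound (s := 1) (d := γ+1) hw (by linarith) (by linarith)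
      rwa [Real.rpow_one] at this
    · rw [← Real.rpow_add_one hw.ne']
      exact rpow_term_bound hw (by linarith) le_rfl
    · rw [← Real.rpow_add_one hw.ne']
      exact rpow_term_bound hw (by linarith) (by linarith)
    · exact rpow_term_bound hw (by linarith) (by linarith)
    · exact rpow_term_bound hw (by linarith) (by linarith)
  have hbH : ∀ w > (0:ℝ), |F' w * w| ≤ (6*L) * (w ^ (γ+1) + w ^ (-(γ+1))) := by
    intro w hw
    obtain ⟨t1, t2, t3, t4, t5, t6⟩ := hSfacts w hw
    have h1 : |F' w * w| ≤ L * (1 + w ^ γ + w ^ (-γ)) * w := by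
      rw [abs_mul, abs_of_pos hw]
      exact mul_le_mul_of_nonneg_right (hgF' w hw) hw.le
    nlinarith [hw.le, hL.le]
  have hbH' : ∀ w > (0:ℝ), |F'' w * w + F' w| ≤ (6*L) * (w ^ (γ+1) + w ^ (-(γ+1))) := by
    intro w hw
    obtain ⟨t1, t2, t3, t4, t5, t6⟩ := hSfacts w hw
    have h1 : |F'' w * w + F' w| ≤ L * (1 + w ^ γ + w ^ (-γ)) * w
        + L * (1 + w ^ γ + w ^ (-γ)) := by
      refine (abs_add_le _ _).trans (add_le_add ?_ (hgF' w hw))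
      rw [abs_mul, abs_of_pos hw]
      exact mul_le_mul_of_nonneg_right (hgF'' w hw) hw.le
    nlinarith [hw.le, hL.le]
  -- bound with exponent γ+2 for F''·sq
  have hbG2 : ∀ w > (0:ℝ), |F'' w * w ^ 2| ≤ (6*L) * (w ^ (γ+2) + w ^ (-(γ+2))) := by
    intro w hw
    have hw2 : (w:ℝ) ^ (2:ℕ) = w ^ ((2:ℕ):ℝ) := (Real.rpow_natCast w 2).symm
    have t1 : w ^ (2:ℕ) ≤ w ^ (γ+2) + w ^ (-(γ+2)) := by
      rw [hw2]; push_cast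
      exact rpow_term_bound hw (by linarith) (by linarith)
    have t2 : w ^ γ * w ^ (2:ℕ) ≤ w ^ (γ+2) + w ^ (-(γ+2)) := by
      rw [hw2]; push_cast
      rw [← Real.rpow_add hw]
      exact rpow_term_bound hw (by linarith) le_rfl
    have t3 : w ^ (-γ) * w ^ (2:ℕ) ≤ w ^ (γ+2) + w ^ (-(γ+2)) := by
      rw [hw2]; push_cast
      rw [← Real.rpow_add hw]
      exact rpow_term_bound hw (by linarith) (by linarith)
    have h1 : |F'' w * w ^ 2| ≤ L * (1 + w ^ γ + w ^ (-γ)) * w ^ 2 := by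
      rw [abs_mul, abs_of_pos (pow_pos hw 2)]
      exact mul_le_mul_of_nonneg_right (hgF'' w hw) (pow_pos hw 2).le
    nlinarith [pow_pos hw 2, hL.le]
  -- core derivative statements
  have hgF1 := core_deriv F F' hdF hcontF' (2*L) γ (by linarith) hγ hbF hbF'
    b c (x/z) hxz
  have hdH : ∀ w > (0:ℝ), HasDerivAt (fun w => F' w * w) (F'' w * w + F' w) w := by
    intro w hw
    exact ((hdF' w hw).mul (hasDerivAt_id' w)).congr_deriv (by ring)
  have hcontH' : ContinuousOn (fun w => F'' w * w + F' w) (Ioi 0) :=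
    (hF''cont.mul continuousOn_id).add hcontF'
  have hgH := core_deriv (fun w => F' w * w) (fun w => F'' w * w + F' w) hdH hcontH'
    (6*L) (γ+1) (by linarith) (by linarith) hbH hbH' b c (x/z) hxz
  -- integrability
  have iF'w : Integrable (fun t => F' ((x/z) * Real.exp (b + c*t)) *
      ((x/z) * Real.exp (b + c*t))) (gaussianReal 0 1) :=
    integ_growth (fun w => F' w * w) (hcontF'.mul continuousOn_id) (6*L) (γ+1)
      hbH b c (x/z) hxz
  have iF''w2 : Integrable (fun t => F'' ((x/z) * Real.exp (b + c*t)) *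
      ((x/z) * Real.exp (b + c*t)) ^ 2) (gaussianReal 0 1) :=
    integ_growth (fun w => F'' w * w ^ 2) (hF''cont.mul (continuous_pow 2).continuousOn)
      (6*L) (γ+2) hbG2 b c (x/z) hxz
  -- integral identities
  set A : ℝ := ∫ t, F' ((x/z) * Real.exp (b + c*t)) *
      ((x/z) * Real.exp (b + c*t)) ∂(gaussianReal 0 1) with hA
  set B : ℝ := ∫ t, F'' ((x/z) * Real.exp (b + c*t)) *
      ((x/z) * Real.exp (b + c*t)) ^ 2 ∂(gaussianReal 0 1) with hB
  have IA : A = (x/z) * ∫ t, F' ((x/z) * Real.exp (b + c*t)) *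
      Real.exp (b + c*t) ∂(gaussianReal 0 1) := by
    rw [hA, ← integral_const_mul]
    exact integral_congr_ae (ae_of_all _ fun t => by ring)
  have IR : (∫ t, (F'' ((x/z) * Real.exp (b + c*t)) * ((x/z) * Real.exp (b + c*t))
        + F' ((x/z) * Real.exp (b + c*t))) * Real.exp (b + c*t) ∂(gaussianReal 0 1))
      = (z/x) * (B + A) := by
    have step : (∫ t, (F'' ((x/z) * Real.exp (b + c*t)) * ((x/z) * Real.exp (b + c*t))
          + F' ((x/z) * Real.exp (b + c*t))) * Real.exp (b + c*t) ∂(gaussianReal 0 1))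
        = ∫ t, (z/x) * (F'' ((x/z) * Real.exp (b + c*t)) * ((x/z) * Real.exp (b + c*t)) ^ 2
          + F' ((x/z) * Real.exp (b + c*t)) * ((x/z) * Real.exp (b + c*t)))
          ∂(gaussianReal 0 1) := by
      refine integral_congr_ae (ae_of_all _ fun t => ?_)
      field_simp
      try ring
    rw [step, integral_const_mul, integral_add iF''w2 iF'w, hA, hB]
  -- part 1
  have part1 : HasDerivAt (fun x' : ℝ =>
      ∫ t, F ((x' / z) * Real.exp (b + c * t)) ∂(gaussianReal 0 1)) ((1/x) * A) x := by
    have hinner : HasDerivAt (fun x' : ℝ => x' / z) (1/z) x := by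
      simpa using (hasDerivAt_id x).div_const z
    have h1 := hgF1.comp x hinner
    have hval : (∫ t, F' ((x/z) * Real.exp (b + c*t)) * Real.exp (b + c*t)
        ∂(gaussianReal 0 1)) * (1/z) = (1/x) * A := by
      rw [IA]; field_simp; try ring
    rw [← hval]
    exact h1
  -- part 3
  have part3 : HasDerivAt (fun z' : ℝ =>
      ∫ t, F ((x / z') * Real.exp (b + c * t)) ∂(gaussianReal 0 1)) (-(1/z) * A) z := by
    have hinner : HasDerivAt (fun z' : ℝ => x / z') ((0 * z - x * 1) / z ^ 2) z :=
      (hasDerivAt_const z x).div (hasDerivAt_id z) hz.ne'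
    have h1 := hgF1.comp z hinner
    have hval : (∫ t, F' ((x/z) * Real.exp (b + c*t)) * Real.exp (b + c*t)
        ∂(gaussianReal 0 1)) * ((0 * z - x * 1) / z ^ 2) = -(1/z) * A := by
      rw [IA]; field_simp; try ring
    rw [← hval]
    exact h1
  -- part 2
  have part2 : HasDerivAt (fun x' : ℝ =>
      (1 / x') * ∫ t, F' ((x' / z) * Real.exp (b + c * t)) *
        ((x' / z) * Real.exp (b + c * t)) ∂(gaussianReal 0 1)) ((1 / x^2) * B) x := by
    have hinner : HasDerivAt (fun x' : ℝ => x' / z) (1/z) x := by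
      simpa using (hasDerivAt_id x).div_const z
    have hh := hgH.comp x hinner
    have hinv : HasDerivAt (fun x' : ℝ => x'⁻¹) (-(x^2)⁻¹) x := hasDerivAt_inv hx.ne'
    have hprod := hinv.mul hh
    simp only [one_div]
    have hval : -(x^2)⁻¹ * (∫ t, F' ((x/z) * Real.exp (b + c*t)) *
          ((x/z) * Real.exp (b + c*t)) ∂(gaussianReal 0 1))
        + x⁻¹ * ((∫ t, (F'' ((x/z) * Real.exp (b + c*t)) * ((x/z) * Real.exp (b + c*t))
          + F' ((x/z) * Real.exp (b + c*t))) * Real.exp (b + c*t) ∂(gaussianReal 0 1))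
          * (1/z)) = (x^2)⁻¹ * B := by
      rw [IR, ← hA]; field_simp; try ring
    rw [← hval]
    exact hprod
  -- part 4
  have hApos : 0 < A := by
    have hpos : ∀ t : ℝ, 0 < F' ((x/z) * Real.exp (b + c*t)) *
        ((x/z) * Real.exp (b + c*t)) := fun t =>
      mul_pos (hF'pos _ (mul_pos hxz (Real.exp_pos _))) (mul_pos hxz (Real.exp_pos _))
    rw [hA, integral_pos_iff_support_of_nonneg_ae
      (ae_of_all _ fun t => (hpos t).le) iF'w]
    have : Function.support (fun t => F' ((x/z) * Real.exp (b + c*t)) *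
        ((x/z) * Real.exp (b + c*t))) = univ :=
      Set.eq_univ_of_forall fun t => (hpos t).ne'
    rw [this]
    simp
  refine ⟨part1, part2, part3, ?_⟩
  have h := mul_pos (one_div_pos.mpr hz) hApos
  linarith
end
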